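/- arXiv:1802.03634 — 6 statements merged into one kernel-verified Lean document; each statement's English description precedes it below -/
import Mathlib

section
/- If S is a feedback vertex set of a graph G, then χ_k^i(G) ≤ k|S| + 2k - i ≤ k(|S| + 2). -/
/-- A `(q,k,i)`-coloring of `G`: each vertex gets a `k`-subset of `{1,…,q}` (modeled as
`Finset (Fin q)`), and adjacent vertices share at most `i` colors. -/
def IsKIColoring {V : Type*} (G : SimpleGraph V) (q k i : ℕ)
    (f : V → Finset (Fin q)) : Prop :=
  (∀ v, (f v).card = k) ∧ ∀ ⦃u v⦄, G.Adj u v → ((f u) ∩ (f v)).card ≤ i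

/-- The `(k,i)`-chromatic number: least `q` admitting a `(q,k,i)`-coloring. -/
noncomputable def kiChromatic {V : Type*} (G : SimpleGraph V) (k i : ℕ) : ℕ :=
  sInf {q : ℕ | ∃ f : V → Finset (Fin q), IsKIColoring G q k i f}

open SimpleGraph in
/-- In an acyclic graph, the lengths of paths from adjacent vertices `u`, `v` to a
common vertex `r` differ by exactly one. -/
lemma adj_path_length_aux {W : Type*} {F : SimpleGraph W} (hF : F.IsAcyclic) {r u v : W}
    (h : F.Adj u v) (p : F.Walk u r) (q : F.Walk v r) (hp : p.IsPath) (hq : q.IsPath) :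
    q.length = p.length + 1 ∨ p.length = q.length + 1 := by
  classical
  by_cases hu : u ∈ q.support
  · left
    have h1 : (⟨q.takeUntil u hu, hq.takeUntil hu⟩ : F.Path v u) = Path.singleton h.symm :=
      hF.path_unique _ _
    have h2 : (⟨q.dropUntil u hu, hq.dropUntil hu⟩ : F.Path u r) = ⟨p, hp⟩ :=
      hF.path_unique _ _
    have h3 := q.take_spec hu
    have h4 := congrArg SimpleGraph.Walk.length h3
    rw [SimpleGraph.Walk.length_append] at h4
    have e1 : (q.takeUntil u hu).length = 1 := by
      have := congrArg (fun x : F.Path v u => x.val.length) h1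
      simpa [Path.singleton] using this
    have e2 : (q.dropUntil u hu).length = p.length := by
      have := congrArg (fun x : F.Path u r => x.val.length) h2
      simpa using this
    omega
  · right
    have hcons : (SimpleGraph.Walk.cons h q).IsPath := hq.cons hu
    have h2 : (⟨SimpleGraph.Walk.cons h q, hcons⟩ : F.Path u r) = ⟨p, hp⟩ :=
      hF.path_unique _ _
    have := congrArg (fun x : F.Path u r => x.val.length) h2
    simpa using this.symm

open SimpleGraph in
/-- An acyclic graph is properly 2-colorable. -/
lemma acyclic_two_coloring {W : Type*} {F : SimpleGraph W} (hF : F.IsAcyclic) :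
    ∃ c : W → Bool, ∀ ⦃u v⦄, F.Adj u v → c u ≠ c v := by
  classical
  have hreach : ∀ v : W, F.Reachable v (F.connectedComponentMk v).out := fun v =>
    (ConnectedComponent.eq.mp ((F.connectedComponentMk v).out_eq)).symm
  -- choose a path from each vertex to the representative of its component
  let P : ∀ v : W, F.Path v (F.connectedComponentMk v).out := fun v =>
    ((hreach v).symm.some.reverse.toPath)
  refine ⟨fun v => decide (Odd (P v).val.length), ?_⟩
  intro u v h hc
  have hcomp : F.connectedComponentMk u = F.connectedComponentMk v :=
    ConnectedComponent.eq.mpr h.reachable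
  -- transport the path of v to a path ending at u's root
  have hr2 : (F.connectedComponentMk v).out = (F.connectedComponentMk u).out := by rw [hcomp]
  let qv : F.Walk v (F.connectedComponentMk u).out := (P v).val.copy rfl hr2
  have hqv : qv.IsPath := (SimpleGraph.Walk.isPath_copy _ rfl hr2).mpr (P v).property
  have hlen : qv.length = (P v).val.length := SimpleGraph.Walk.length_copy _ _ _
  have key := adj_path_length_aux hF h (P u).val qv (P u).property hqv
  simp only [decide_eq_decide] at hc
  rcases key with h1 | h1 <;> rw [hlen] at h1 <;>
    rw [h1, Nat.odd_add_one] at hc <;> tauto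

lemma natBlock_card {q o k : ℕ} (h : ∀ m ∈ Finset.Ico o (o + k), m < q) :
    ((Finset.Ico o (o + k)).attachFin h).card = k := by
  rw [Finset.card_attachFin, Nat.card_Ico]; omega

lemma natBlock_inter {q o₁ o₂ k : ℕ} (h₁ : ∀ m ∈ Finset.Ico o₁ (o₁ + k), m < q)
    (h₂ : ∀ m ∈ Finset.Ico o₂ (o₂ + k), m < q) :
    (((Finset.Ico o₁ (o₁ + k)).attachFin h₁) ∩ ((Finset.Ico o₂ (o₂ + k)).attachFin h₂)).card
      ≤ min (o₁ + k) (o₂ + k) - max o₁ o₂ := by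
  classical
  set A := (Finset.Ico o₁ (o₁ + k)).attachFin h₁
  set B := (Finset.Ico o₂ (o₂ + k)).attachFin h₂
  have himg : (A ∩ B).image (Fin.val) ⊆ Finset.Ico (max o₁ o₂) (min (o₁ + k) (o₂ + k)) := by
    intro m hm
    simp only [Finset.mem_image] at hm
    obtain ⟨a, ha, rfl⟩ := hm
    rw [Finset.mem_inter] at ha
    have ha1 := (Finset.mem_attachFin h₁).mp ha.1
    have ha2 := (Finset.mem_attachFin h₂).mp ha.2
    simp only [Finset.mem_Ico] at ha1 ha2 ⊢
    omega
  calc (A ∩ B).card = ((A ∩ B).image (Fin.val)).card :=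
        (Finset.card_image_of_injective _ Fin.val_injective).symm
    _ ≤ (Finset.Ico (max o₁ o₂) (min (o₁ + k) (o₂ + k))).card := Finset.card_le_card himg
    _ = min (o₁ + k) (o₂ + k) - max o₁ o₂ := Nat.card_Ico _ _

theorem stmt7 {V : Type*} [Fintype V] [DecidableEq V] (G : SimpleGraph V)
    (S : Finset V) (hS : (G.induce ((↑S : Set V)ᶜ)).IsAcyclic)
    (k i : ℕ) (hik : i ≤ k) :
    kiChromatic G k i ≤ k * S.card + (2 * k - i) ∧
      k * S.card + (2 * k - i) ≤ k * (S.card + 2) := by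
  classical
  constructor
  · -- construct a coloring with q colors
    set q := k * S.card + (2 * k - i) with hq
    obtain ⟨c, hc⟩ := acyclic_two_coloring hS
    -- offset for each vertex
    have hidx : ∀ v (hv : v ∈ S), (S.equivFin ⟨v, hv⟩ : ℕ) < S.card := fun v hv =>
      (S.equivFin ⟨v, hv⟩).isLt
    let off : V → ℕ := fun v =>
      if hv : v ∈ S then k * (S.equivFin ⟨v, hv⟩ : ℕ)
      else k * S.card + (if c ⟨v, by simpa using hv⟩ then k - i else 0)
    have hoff : ∀ v, off v + k ≤ q := by
      intro v
      simp only [off]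
      split
      · rename_i hv
        have : (S.equivFin ⟨v, hv⟩ : ℕ) + 1 ≤ S.card := hidx v hv
        have := Nat.mul_le_mul_left k this
        rw [Nat.mul_add, Nat.mul_one] at this
        omega
      · split <;> omega
    have hlt : ∀ v, ∀ m ∈ Finset.Ico (off v) (off v + k), m < q := by
      intro v m hm
      have := hoff v
      simp only [Finset.mem_Ico] at hm
      omega
    refine Nat.sInf_le ⟨fun v => (Finset.Ico (off v) (off v + k)).attachFin (hlt v), ?_, ?_⟩
    · intro v; exact natBlock_card _
    · intro u v huv
      have hne : u ≠ v := huv.ne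
      have hbound := natBlock_inter (hlt u) (hlt v)
      refine le_trans hbound ?_
      by_cases hu : u ∈ S <;> by_cases hv : v ∈ S
      · -- both in S : distinct indices
        have hj : (S.equivFin ⟨u, hu⟩ : ℕ) ≠ (S.equivFin ⟨v, hv⟩ : ℕ) := by
          intro hEq
          apply hne
          have := S.equivFin.injective (Fin.ext hEq)
          exact Subtype.ext_iff.mp this
        simp only [off, dif_pos hu, dif_pos hv]
        rcases Nat.lt_or_ge (S.equivFin ⟨u, hu⟩ : ℕ) (S.equivFin ⟨v, hv⟩ : ℕ) with hlt' | hge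
        · have := Nat.mul_le_mul_left k (Nat.succ_le_of_lt hlt')
          rw [Nat.mul_succ] at this
          omega
        · have hlt'' : (S.equivFin ⟨v, hv⟩ : ℕ) < (S.equivFin ⟨u, hu⟩ : ℕ) := by omega
          have := Nat.mul_le_mul_left k (Nat.succ_le_of_lt hlt'')
          rw [Nat.mul_succ] at this
          omega
      · -- u in S, v not
        have : (S.equivFin ⟨u, hu⟩ : ℕ) + 1 ≤ S.card := hidx u hu
        have h2 := Nat.mul_le_mul_left k this
        rw [Nat.mul_add, Nat.mul_one] at h2
        simp only [off, dif_pos hu, dif_neg hv]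
        split <;> omega
      · -- v in S, u not
        have : (S.equivFin ⟨v, hv⟩ : ℕ) + 1 ≤ S.card := hidx v hv
        have h2 := Nat.mul_le_mul_left k this
        rw [Nat.mul_add, Nat.mul_one] at h2
        simp only [off, dif_neg hu, dif_pos hv]
        split <;> omega
      · -- both outside S : adjacent in the forest, so different colors
        have hadj : (G.induce ((↑S : Set V)ᶜ)).Adj ⟨u, by simpa using hu⟩ ⟨v, by simpa using hv⟩ := by
          simpa using huv
        have hcc := hc hadj
        simp only [off, dif_neg hu, dif_neg hv]
        rcases Bool.eq_false_or_eq_true (c ⟨u, by simpa using hu⟩) with h1 | h1 <;>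
          rcases Bool.eq_false_or_eq_true (c ⟨v, by simpa using hv⟩) with h2 | h2 <;>
          simp [h1, h2] at hcc ⊢ <;> omega
  · have : k * (S.card + 2) = k * S.card + 2 * k := by ring
    omega
end

section
/- For r ≥ 2k and k ≥ 1, any (k,0)-coloring of the Kneser graph K(r,k) requires at least r colors. -/
/-- The Kneser graph `K(r,k)`: vertices are the `k`-subsets of `{1,…,r}`,
adjacent iff disjoint. -/
def KneserGraph (r k : ℕ) : SimpleGraph {s : Finset (Fin r) // s.card = k} :=
  SimpleGraph.fromRel fun x y => Disjoint x.1 y.1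

theorem stmt9 (r k : ℕ) (hk : 1 ≤ k) (hr : 2 * k ≤ r) (q : ℕ)
    (f : {s : Finset (Fin r) // s.card = k} → Finset (Fin q))
    (hf : IsKIColoring (KneserGraph r k) q k 0 f) :
    r ≤ q := by
  obtain ⟨hcard, hadj⟩ := hf
  -- color classes
  set A : Fin q → Finset {s : Finset (Fin r) // s.card = k} :=
    fun c => Finset.univ.filter (fun v => c ∈ f v) with hA
  -- each color class, viewed as a family of k-subsets, is intersecting
  have hbound : ∀ c : Fin q, (A c).card ≤ (r - 1).choose (k - 1) := by
    intro c
    set B : Finset (Finset (Fin r)) :=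
      (A c).map ⟨Subtype.val, Subtype.val_injective⟩ with hB
    have hBcard : B.card = (A c).card := Finset.card_map _
    rw [← hBcard]
    apply Finset.erdos_ko_rado (r := k)
    · intro s hs t ht hdis
      simp only [hB, Finset.coe_map, Set.mem_image, Finset.mem_coe, hA,
        Finset.mem_filter, Function.Embedding.coeFn_mk] at hs ht
      obtain ⟨u, ⟨-, hu⟩, rfl⟩ := hs
      obtain ⟨v, ⟨-, hv⟩, rfl⟩ := ht
      by_cases huv : u = v
      · subst huv
        have hne : u.1.Nonempty := Finset.card_pos.mp (by rw [u.2]; exact hk)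
        exact hne.ne_empty (by simpa using disjoint_self.mp hdis)
      · have hAdj : (KneserGraph r k).Adj u v := by
          constructor
          · exact fun h => huv (Subtype.ext (congrArg Subtype.val h))
          · exact Or.inl hdis
        have := hadj hAdj
        have hc : c ∈ f u ∩ f v := Finset.mem_inter.mpr ⟨hu, hv⟩
        have := Finset.card_pos.mpr ⟨c, hc⟩
        omega
    · intro s hs
      simp only [hB, Finset.coe_map, Set.mem_image, Finset.mem_coe] at hs
      obtain ⟨u, -, rfl⟩ := hs
      exact u.2
    · omega
  -- double counting
  have hsum : ∑ c : Fin q, (A c).card =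
      k * Fintype.card {s : Finset (Fin r) // s.card = k} := by
    have : ∑ c : Fin q, (A c).card = ∑ v : {s : Finset (Fin r) // s.card = k}, (f v).card := by
      simp only [hA, Finset.card_filter]
      rw [Finset.sum_comm]
      congr 1
      ext v
      rw [Finset.sum_boole]
      simp [Finset.filter_mem_eq_inter]
    rw [this]
    simp [hcard, Finset.sum_const, mul_comm]
  have hcardV : Fintype.card {s : Finset (Fin r) // s.card = k} = r.choose k := by
    rw [Fintype.card_finset_len, Fintype.card_fin]
  have h1 : k * r.choose k ≤ q * (r - 1).choose (k - 1) := by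
    calc k * r.choose k = ∑ c : Fin q, (A c).card := by rw [hsum, hcardV]
    _ ≤ ∑ _c : Fin q, (r - 1).choose (k - 1) := Finset.sum_le_sum fun c _ => hbound c
    _ = q * (r - 1).choose (k - 1) := by simp [mul_comm]
  have hid : r * (r - 1).choose (k - 1) = k * r.choose k := by
    have h := Nat.add_one_mul_choose_eq (r - 1) (k - 1)
    have hr1 : r - 1 + 1 = r := by omega
    have hk1 : k - 1 + 1 = k := by omega
    simp only [Nat.succ_eq_add_one, hr1, hk1] at h
    rw [h, mul_comm]
  have hpos : 0 < (r - 1).choose (k - 1) := Nat.choose_pos (by omega)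
  have : r * (r - 1).choose (k - 1) ≤ q * (r - 1).choose (k - 1) := hid ▸ h1
  exact Nat.le_of_mul_le_mul_right this hpos
end

section
/- For r ≥ 2k and k ≥ 1, in any (r,k,0)-coloring of the Kneser graph K(r,k), every color occurs in the color set of exactly C(r-1,k-1) vertices. -/
lemma classBound (r k : ℕ) (hk : 1 ≤ k) (hr : 2 * k ≤ r)
    (f : {s : Finset (Fin r) // s.card = k} → Finset (Fin r))
    (hf : (∀ v, (f v).card = k) ∧ ∀ ⦃u v⦄,
      (SimpleGraph.fromRel fun x y : {s : Finset (Fin r) // s.card = k} => Disjoint x.1 y.1).Adj u v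
        → ((f u) ∩ (f v)).card ≤ 0) (c : Fin r) :
    (Finset.univ.filter fun v => c ∈ f v).card ≤ (r - 1).choose (k - 1) := by
  classical
  set S := Finset.univ.filter fun v : {s : Finset (Fin r) // s.card = k} => c ∈ f v
  have hinj : Set.InjOn (fun v : {s : Finset (Fin r) // s.card = k} => v.1) S := by
    intro a _ b _ h; exact Subtype.ext h
  have hcard : S.card = (S.image (fun v => v.1)).card := (Finset.card_image_of_injOn hinj).symm
  rw [hcard]
  apply Finset.erdos_ko_rado
  · intro A hA B hB hdis
    simp only [Finset.coe_image, Set.mem_image, Finset.mem_coe, Finset.mem_filter, S] at hA hB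
    obtain ⟨u, ⟨-, hu⟩, rfl⟩ := hA
    obtain ⟨v, ⟨-, hv⟩, rfl⟩ := hB
    by_cases huv : u = v
    · subst huv
      have h0 : u.1 = ∅ := disjoint_self.mp hdis
      have h1 := u.2
      rw [h0, Finset.card_empty] at h1
      omega
    · have hadj : (SimpleGraph.fromRel fun x y : {s : Finset (Fin r) // s.card = k} =>
          Disjoint x.1 y.1).Adj u v := ⟨huv, Or.inl hdis⟩
      have := hf.2 hadj
      have hc : c ∈ f u ∩ f v := Finset.mem_inter.2 ⟨hu, hv⟩
      have := Finset.card_pos.mpr ⟨c, hc⟩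
      omega
  · intro A hA
    simp only [Finset.coe_image, Set.mem_image, Finset.mem_coe, S] at hA
    obtain ⟨u, -, rfl⟩ := hA
    exact u.2
  · omega

theorem stmt10 (r k : ℕ) (hk : 1 ≤ k) (hr : 2 * k ≤ r)
    (f : {s : Finset (Fin r) // s.card = k} → Finset (Fin r))
    (hf : IsKIColoring (KneserGraph r k) r k 0 f) (c : Fin r) :
    (Finset.univ.filter fun v => c ∈ f v).card = (r - 1).choose (k - 1) := by
  classical
  have hbound : ∀ c : Fin r,
      (Finset.univ.filter fun v => c ∈ f v).card ≤ (r - 1).choose (k - 1) :=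
    fun c => classBound r k hk hr f hf c
  -- double counting
  have hsum : ∑ c : Fin r, (Finset.univ.filter fun v => c ∈ f v).card
      = k * (Fintype.card {s : Finset (Fin r) // s.card = k}) := by
    simp_rw [Finset.card_filter]
    rw [Finset.sum_comm]
    simp_rw [← Finset.card_filter]
    have : ∀ v : {s : Finset (Fin r) // s.card = k},
        (Finset.univ.filter fun c => c ∈ f v).card = k := by
      intro v
      rw [Finset.filter_mem_eq_inter, Finset.univ_inter]
      exact hf.1 v
    rw [Finset.sum_congr rfl fun v _ => this v, Finset.sum_const, Finset.card_univ,
      smul_eq_mul, mul_comm]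
  have hcardV : Fintype.card {s : Finset (Fin r) // s.card = k} = r.choose k := by
    rw [Fintype.card_finset_len, Fintype.card_fin]
  have hid : r * (r - 1).choose (k - 1) = k * r.choose k := by
    have h1 : 1 ≤ r := by omega
    obtain ⟨r', rfl⟩ : ∃ r', r = r' + 1 := ⟨r - 1, by omega⟩
    obtain ⟨k', rfl⟩ : ∃ k', k = k' + 1 := ⟨k - 1, by omega⟩
    simp only [Nat.add_sub_cancel]
    rw [mul_comm (k' + 1)]
    exact Nat.add_one_mul_choose_eq r' k'
  have htotal : ∑ c : Fin r, (Finset.univ.filter fun v => c ∈ f v).card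
      = ∑ c : Fin r, (r - 1).choose (k - 1) := by
    rw [hsum, hcardV, Finset.sum_const, Finset.card_univ, Fintype.card_fin, smul_eq_mul, hid]
  exact (Finset.sum_eq_sum_iff_of_le (fun i _ => hbound i)).mp htotal c (Finset.mem_univ c)
end

section
/- For r ≥ 2k+1 and k ≥ 1, every (r,k,0)-coloring C of the Kneser graph K(r,k) is obtained from the natural coloring by a permutation of the colors: there exists a permutation σ of {1,...,r} such that for every vertex v (a k-subset of {1,...,r}), C(v) = σ(v) (the image of the set v under σ). -/
set_option maxHeartbeats 1600000

namespace EKRU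
open Finset

variable {n k : ℕ} [NeZero n]

/-- circular interval of length `k` starting at `s` in `ZMod n`. -/
def arc (n k : ℕ) (s : ZMod n) : Finset (ZMod n) :=
  (Finset.range k).image (fun m : ℕ => s + (m : ZMod n))

lemma mem_arc {s t : ZMod n} (hkn : k ≤ n) : t ∈ arc n k s ↔ (t - s).val < k := by
  simp only [arc, Finset.mem_image, Finset.mem_range]
  constructor
  · rintro ⟨m, hm, rfl⟩
    rwa [add_sub_cancel_left, ZMod.val_cast_of_lt (lt_of_lt_of_le hm hkn)]
  · intro h
    exact ⟨(t - s).val, h, by rw [ZMod.natCast_rightInverse (t - s), add_sub_cancel]⟩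

lemma card_arc (hkn : k ≤ n) (s : ZMod n) : (arc n k s).card = k := by
  rw [arc, Finset.card_image_of_injOn, Finset.card_range]
  intro a ha b hb h
  simp only [Finset.coe_range, Set.mem_Iio] at ha hb
  have h2 : ((a : ZMod n)) = b := add_left_cancel h
  have := congrArg ZMod.val h2
  rwa [ZMod.val_cast_of_lt (lt_of_lt_of_le ha hkn), ZMod.val_cast_of_lt (lt_of_lt_of_le hb hkn)]
    at this

lemma self_mem_arc (hk : 1 ≤ k) (hkn : k ≤ n) (s : ZMod n) : s ∈ arc n k s := by
  rw [mem_arc hkn, sub_self, ZMod.val_zero]; exact hk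

lemma arc_injective (hk : 1 ≤ k) (hn : 2*k+1 ≤ n) {u u' : ZMod n}
    (h : arc n k u = arc n k u') : u = u' := by
  have hkn : k ≤ n := by omega
  have h1 : u ∈ arc n k u' := h ▸ self_mem_arc hk hkn u
  have h2 : u' ∈ arc n k u := h.symm ▸ self_mem_arc hk hkn u'
  rw [mem_arc hkn] at h1 h2
  by_contra hne
  have hne' : u' - u ≠ 0 := sub_ne_zero.mpr (Ne.symm hne)
  have h3 : (u - u').val = n - (u' - u).val := by
    rw [show u - u' = -(u' - u) by ring, ZMod.neg_val, if_neg hne']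
  have := ZMod.val_lt (u' - u)
  have hpos : 0 < (u' - u).val := Nat.pos_of_ne_zero (fun h0 => hne' (by
    have := ZMod.natCast_rightInverse (u' - u); rw [← this, h0]; simp))
  omega

/-- if the difference is "far" in both directions the arcs are disjoint. -/
lemma arc_disjoint (hkn : k ≤ n) {u u' : ZMod n}
    (h1 : ¬ (u' - u).val < k) (h2 : ¬ (u - u').val < k) :
    Disjoint (arc n k u) (arc n k u') := by
  rw [Finset.disjoint_left]
  intro t ht ht'
  rw [mem_arc hkn] at ht ht'
  rcases le_or_gt (t - u').val ((t - u).val) with hle | hlt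
  · apply h1
    have h3 : u' - u = (((t - u).val - (t - u').val : ℕ) : ZMod n) := by
      rw [Nat.cast_sub hle, ZMod.natCast_rightInverse, ZMod.natCast_rightInverse]; ring
    rw [h3, ZMod.val_cast_of_lt (by have := ZMod.val_lt (t - u); omega)]
    omega
  · apply h2
    have h3 : u - u' = (((t - u').val - (t - u).val : ℕ) : ZMod n) := by
      rw [Nat.cast_sub hlt.le, ZMod.natCast_rightInverse, ZMod.natCast_rightInverse]; ring
    rw [h3, ZMod.val_cast_of_lt (by have := ZMod.val_lt (t - u'); omega)]
    omega

lemma downclosed_mem_iff {M : Finset ℕ} (hdc : ∀ c, c + 1 ∈ M → c ∈ M) :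
    ∀ c, c ∈ M ↔ c < M.card := by
  have key : ∀ c, c ∈ M → ∀ j, j ≤ c → j ∈ M := by
    intro c
    induction c with
    | zero =>
      intro hc j hj
      have hj0 : j = 0 := by omega
      exact hj0 ▸ hc
    | succ c ih =>
      intro hc j hj
      rcases Nat.lt_succ_iff_lt_or_eq.mp (Nat.lt_succ_of_le hj) with h | h
      · exact ih (hdc c hc) j (by omega)
      · exact h ▸ hc
  intro c
  constructor
  · intro hc
    have hsub : Finset.range (c+1) ⊆ M := fun j hj =>
      key c hc j (Nat.lt_succ_iff.mp (Finset.mem_range.mp hj))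
    simpa using Finset.card_le_card hsub
  · intro hc
    by_contra hcM
    have hsub : M ⊆ Finset.range c := by
      intro x hx
      rw [Finset.mem_range]
      by_contra hxc
      exact hcM (key x hx c (by omega))
    have := Finset.card_le_card hsub
    simp at this
    omega
open Classical in
lemma close_family (hk : 1 ≤ k) (hn : 2*k+1 ≤ n) {S : Finset (ZMod n)}
    (hS : ∀ s ∈ S, ∀ s' ∈ S, (s' - s).val < k ∨ (s - s').val < k) :
    S.card ≤ k ∧ (S.card = k → ∃ u, S = arc n k u) := by
  have hkn : k ≤ n := by omega
  rcases S.eq_empty_or_nonempty with rfl | ⟨s₀, hs₀⟩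
  · constructor
    · simp
    · intro h; simp at h; omega
  set ψ : ZMod n → ℕ := fun s => if (s - s₀).val < k then (s - s₀).val else (s - s₀).val - (n - k)
    with hψ
  -- wrapped elements
  have hwrap : ∀ s ∈ S, ¬((s - s₀).val < k) →
      (s - s₀).val = n - k + ψ s ∧ 1 ≤ ψ s ∧ ψ s < k := by
    intro s hs hw
    have h1 : (s₀ - s).val < k := by
      rcases hS s hs s₀ hs₀ with h | h
      · exact h
      · exact absurd h hw
    have hne : s₀ - s ≠ 0 := by
      intro h0
      have : s = s₀ := by
        have := sub_eq_zero.mp h0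
        exact this.symm
      rw [this] at hw
      simp [ZMod.val_zero] at hw
      omega
    have hneg : (s - s₀).val = n - (s₀ - s).val := by
      rw [show s - s₀ = -(s₀ - s) by ring, ZMod.neg_val, if_neg hne]
    have hpos : 0 < (s₀ - s).val := Nat.pos_of_ne_zero fun h0 => hne (by
      have := ZMod.natCast_rightInverse (s₀ - s)
      rw [← this, h0]; simp)
    have hψs : ψ s = (s - s₀).val - (n - k) := by rw [hψ]; simp [hw]
    omega
  have hψlt : ∀ s ∈ S, ψ s < k := by
    intro s hs
    by_cases hw : (s - s₀).val < k
    · rw [hψ]; simpa [hw] using hw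
    · exact (hwrap s hs hw).2.2
  -- helper: value of differences
  have hvsub : ∀ s s' : ZMod n, (s - s₀).val ≤ (s' - s₀).val →
      (s' - s).val = (s' - s₀).val - (s - s₀).val := by
    intro s s' h
    have ha : s - s₀ = (((s - s₀).val : ℕ) : ZMod n) := (ZMod.natCast_rightInverse (s - s₀)).symm
    have hb : s' - s₀ = (((s' - s₀).val : ℕ) : ZMod n) := (ZMod.natCast_rightInverse (s' - s₀)).symm
    have hss : s' - s = (((s' - s₀).val - (s - s₀).val : ℕ) : ZMod n) := by
      rw [Nat.cast_sub h, ← ha, ← hb]; ring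
    rw [hss, ZMod.val_cast_of_lt (by have := ZMod.val_lt (s' - s₀); omega)]
  have hvneg : ∀ x : ZMod n, x ≠ 0 → (-x).val = n - x.val := by
    intro x hx; rw [ZMod.neg_val, if_neg hx]
  have hvpos : ∀ x : ZMod n, x ≠ 0 → 0 < x.val := by
    intro x hx
    refine Nat.pos_of_ne_zero fun h0 => hx ?_
    have := ZMod.natCast_rightInverse x
    rw [← this, h0]; simp
  -- master contradiction: two elements whose val-differences from s₀ differ by something in [k, n-k]
  have hcontra : ∀ s ∈ S, ∀ s' ∈ S, (s - s₀).val ≤ (s' - s₀).val →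
      k ≤ (s' - s₀).val - (s - s₀).val → (s' - s₀).val - (s - s₀).val ≤ n - k → False := by
    intro s hs s' hs' hle h1 h2
    have hd := hvsub s s' hle
    have hne : s' - s ≠ 0 := by
      intro h0
      rw [h0, ZMod.val_zero] at hd
      omega
    have hd2 : (s - s').val = n - ((s' - s₀).val - (s - s₀).val) := by
      rw [show s - s' = -(s' - s) by ring, hvneg _ hne, hd]
    rcases hS s hs s' hs' with h | h <;> omega
  -- injectivity of ψ on S
  have hinj : Set.InjOn ψ S := by
    intro s hs s' hs' heq
    by_cases hw : (s - s₀).val < k <;> by_cases hw' : (s' - s₀).val < k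
    · have h1 : ψ s = (s - s₀).val := by rw [hψ]; simp [hw]
      have h2 : ψ s' = (s' - s₀).val := by rw [hψ]; simp [hw']
      have : s - s₀ = s' - s₀ := by
        rw [← ZMod.natCast_rightInverse (s - s₀), ← ZMod.natCast_rightInverse (s' - s₀),
          ← h1, ← h2, heq]
      exact sub_left_injective this
    · obtain ⟨hv', -, hlt'⟩ := hwrap s' hs' hw'
      have h1 : ψ s = (s - s₀).val := by rw [hψ]; simp [hw]
      exact (hcontra s hs s' hs' (by omega) (by omega) (by omega)).elim
    · obtain ⟨hv, -, hlt⟩ := hwrap s hs hw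
      have h2 : ψ s' = (s' - s₀).val := by rw [hψ]; simp [hw']
      exact (hcontra s' hs' s hs (by omega) (by omega) (by omega)).elim
    · obtain ⟨hv, h1', hlt⟩ := hwrap s hs hw
      obtain ⟨hv', h1'', hlt'⟩ := hwrap s' hs' hw'
      have : s - s₀ = s' - s₀ := by
        rw [← ZMod.natCast_rightInverse (s - s₀), ← ZMod.natCast_rightInverse (s' - s₀), hv, hv', heq]
      exact sub_left_injective this
  have hmaps : ∀ s ∈ S, ψ s ∈ Finset.range k := fun s hs => Finset.mem_range.mpr (hψlt s hs)
  have hbound : S.card ≤ k := by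
    have := Finset.card_le_card_of_injOn ψ hmaps hinj
    simpa using this
  refine ⟨hbound, fun hcard => ?_⟩
  -- now equality case
  have himg : S.image ψ = Finset.range k := by
    apply Finset.eq_of_subset_of_card_le
    · intro c hc
      obtain ⟨s, hs, rfl⟩ := Finset.mem_image.mp hc
      exact hmaps s hs
    · rw [Finset.card_range, Finset.card_image_of_injOn hinj, hcard]
  have hsurj : ∀ c, c < k → ∃ s ∈ S, ψ s = c := by
    intro c hc
    have : c ∈ S.image ψ := himg ▸ Finset.mem_range.mpr hc
    simpa using this
  set U : ℕ → Prop := fun c => ∃ s ∈ S, (s - s₀).val = c with hU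
  set M : Finset ℕ := (Finset.range k).filter U with hM
  have hU0 : U 0 := ⟨s₀, hs₀, by simp⟩
  have hdc : ∀ c, c + 1 ∈ M → c ∈ M := by
    intro c hc1
    rw [hM, Finset.mem_filter, Finset.mem_range] at hc1 ⊢
    obtain ⟨hck, s', hs', hv'⟩ := hc1
    refine ⟨by omega, ?_⟩
    rcases Nat.eq_zero_or_pos c with rfl | hcpos
    · exact hU0
    by_contra hUc
    -- the ψ-witness of value c must be wrapped
    obtain ⟨s, hs, hψs⟩ := hsurj c (by omega)
    have hw : ¬((s - s₀).val < k) := by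
      intro hlt
      have : ψ s = (s - s₀).val := by rw [hψ]; simp [hlt]
      exact hUc ⟨s, hs, by omega⟩
    obtain ⟨hv, -, -⟩ := hwrap s hs hw
    -- s has val n - k + c, s' has val c + 1 : gap n - k - 1 ∈ [k, n-k]
    exact hcontra s' hs' s hs (by omega) (by omega) (by omega)
  have hmem_iff := downclosed_mem_iff hdc
  set m' : ℕ := M.card with hm'
  have hm'pos : 1 ≤ m' := by
    have : (0 : ℕ) ∈ M := by
      rw [hM, Finset.mem_filter, Finset.mem_range]
      exact ⟨by omega, hU0⟩
    have := (hmem_iff 0).mp this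
    omega
  have hm'le : m' ≤ k := by
    rw [hm', hM]
    calc ((Finset.range k).filter U).card ≤ (Finset.range k).card := Finset.card_filter_le _ _
    _ = k := Finset.card_range k
  refine ⟨s₀ + ((m' : ℕ) : ZMod n) - ((k : ℕ) : ZMod n), ?_⟩
  apply Finset.eq_of_subset_of_card_le
  · -- S ⊆ arc
    intro s hs
    rw [mem_arc hkn]
    have hexp : s - (s₀ + ((m' : ℕ) : ZMod n) - ((k : ℕ) : ZMod n))
        = (s - s₀) - ((m' : ℕ) : ZMod n) + ((k : ℕ) : ZMod n) := by ring
    by_cases hw : (s - s₀).val < k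
    · set c := (s - s₀).val with hc
      have hcM : c ∈ M := by
        rw [hM, Finset.mem_filter, Finset.mem_range]
        exact ⟨hw, ⟨s, hs, rfl⟩⟩
      have hcm : c < m' := (hmem_iff c).mp hcM
      have : s - (s₀ + ((m' : ℕ) : ZMod n) - ((k : ℕ) : ZMod n)) = ((c + k - m' : ℕ) : ZMod n) := by
        rw [hexp, ← ZMod.natCast_rightInverse (s - s₀), ← hc]
        push_cast [Nat.cast_sub (show m' ≤ c + k by omega)]
        ring
      rw [this, ZMod.val_cast_of_lt (by omega)]
      omega
    · obtain ⟨hv, h1, hlt⟩ := hwrap s hs hw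
      set e := ψ s with he
      have hem : m' ≤ e := by
        by_contra hlt2
        have heM : e ∈ M := (hmem_iff e).mpr (by omega)
        rw [hM, Finset.mem_filter] at heM
        obtain ⟨-, s'', hs'', hv''⟩ := heM
        have hψ'' : ψ s'' = e := by
          rw [hψ]; simp only [hv'']
          rw [if_pos (by omega)]
        have : s'' = s := hinj hs'' hs (by rw [hψ''])
        rw [this] at hv''
        omega
      have : s - (s₀ + ((m' : ℕ) : ZMod n) - ((k : ℕ) : ZMod n)) = ((e - m' : ℕ) : ZMod n) := by
        rw [hexp, ← ZMod.natCast_rightInverse (s - s₀), hv]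
        push_cast [Nat.cast_sub (show k ≤ n by omega), Nat.cast_sub (show m' ≤ e by omega)]
        rw [ZMod.natCast_self]
        ring
      rw [this, ZMod.val_cast_of_lt (by omega)]
      omega
  · rw [card_arc hkn, hcard]

lemma arc_stable (hk : 1 ≤ k) (hn : 2*k+1 ≤ n) {u u' a : ZMod n}
    (hΔ : ∀ s : ZMod n, (s ∈ arc n k u ∧ s ∉ arc n k u') ∨ (s ∈ arc n k u' ∧ s ∉ arc n k u) →
       s = a ∨ s = a - ((k : ℕ) : ZMod n))
    (ht1 : u + ((k - 1 : ℕ) : ZMod n) ≠ a)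
    (ht2 : u + ((k - 1 : ℕ) : ZMod n) ≠ a - 1) :
    arc n k u = arc n k u' := by
  have hkn : k ≤ n := by omega
  -- basic cast tools
  have hvlt : ∀ c : ℕ, c < n → ((c : ZMod n)).val = c := fun c hc => ZMod.val_cast_of_lt hc
  have hcast0 : ∀ c : ℕ, 0 < c → c < n → ((c : ZMod n)) ≠ 0 := by
    intro c h1 h2 h0
    have h3 := hvlt c h2
    rw [h0, ZMod.val_zero] at h3
    omega
  have hEq : ∀ (w : ZMod n) (c e : ℕ), c < n → e < n →
      (w + (c : ZMod n) = w + (e : ZMod n) ↔ c = e) := by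
    intro w c e hc he
    constructor
    · intro h
      have h2 : (c : ZMod n) = e := add_left_cancel h
      have := congrArg ZMod.val h2
      rwa [hvlt c hc, hvlt e he] at this
    · intro h; rw [h]
  have hsubval : ∀ c e : ℕ, c < n → e < n →
      ((c : ZMod n) - (e : ZMod n)).val = if e ≤ c then c - e else n - (e - c) := by
    intro c e hc he
    by_cases hle : e ≤ c
    · rw [if_pos hle, ← Nat.cast_sub hle, hvlt _ (by omega)]
    · rw [if_neg hle]
      have h1 : (c : ZMod n) - e = -((e : ZMod n) - c) := by ring
      have h2 : ((e : ZMod n) - c) = (((e - c : ℕ)) : ZMod n) := by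
        rw [Nat.cast_sub (by omega)]
      rw [h1, h2, ZMod.neg_val, if_neg (hcast0 _ (by omega) (by omega)), hvlt _ (by omega)]
  have hmem : ∀ c e : ℕ, c < n → e < n →
      (u + (c : ZMod n) ∈ arc n k (u + (e : ZMod n)) ↔ (if e ≤ c then c - e else n - (e - c)) < k) := by
    intro c e hc he
    rw [mem_arc hkn, show (u + (c : ZMod n)) - (u + (e : ZMod n)) = (c : ZMod n) - e from by ring,
      hsubval c e hc he]
  -- rewrite u as u + cast 0 for uniformity
  have hu0 : u = u + ((0 : ℕ) : ZMod n) := by simp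
  by_cases huu' : u' = u
  · rw [huu']
  exfalso
  -- set d
  set d : ℕ := (u' - u).val with hd
  have hu' : u' = u + ((d : ℕ) : ZMod n) := by
    rw [hd, ZMod.natCast_rightInverse (u' - u)]; ring
  have hdn : d < n := ZMod.val_lt (u' - u)
  have hd0 : 0 < d := by
    rcases Nat.eq_zero_or_pos d with h0 | h
    · exfalso
      apply huu'
      rw [hu', h0]; simp
    · exact h
  -- membership of generic point u + cast c in arc u and arc u'
  have hmemu : ∀ c : ℕ, c < n → (u + (c : ZMod n) ∈ arc n k u ↔ c < k) := by
    intro c hc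
    simpa using hmem c 0 hc (by omega)
  have hmemu' : ∀ c : ℕ, c < n →
      (u + (c : ZMod n) ∈ arc n k u' ↔ (if d ≤ c then c - d else n - (d - c)) < k) := by
    intro c hc
    rw [hu', hmem c d hc hdn]
  -- the two candidate elements a and a - k: helper to finish from two distinct elements
  have htwo : ∀ c e : ℕ, c < n → e < n → c ≠ e →
      (u + (c : ZMod n) = a ∨ u + (c : ZMod n) = a - (k : ZMod n)) →
      (u + (e : ZMod n) = a ∨ u + (e : ZMod n) = a - (k : ZMod n)) →
      ((u + (c : ZMod n) = a ∧ u + (e : ZMod n) = a - (k : ZMod n)) ∨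
       (u + (e : ZMod n) = a ∧ u + (c : ZMod n) = a - (k : ZMod n))) := by
    intro c e hc he hne h1 h2
    have hne' : u + (c : ZMod n) ≠ u + (e : ZMod n) := fun h => hne ((hEq u c e hc he).mp h)
    rcases h1 with h1 | h1 <;> rcases h2 with h2 | h2
    · exact absurd (h1.trans h2.symm) hne'
    · exact Or.inl ⟨h1, h2⟩
    · exact Or.inr ⟨h2, h1⟩
    · exact absurd (h1.trans h2.symm) hne'
  -- three distinct elements in Δ is impossible
  have hthree : ∀ c e g : ℕ, c < n → e < n → g < n → c ≠ e → c ≠ g → e ≠ g →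
      (u + (c : ZMod n) = a ∨ u + (c : ZMod n) = a - (k : ZMod n)) →
      (u + (e : ZMod n) = a ∨ u + (e : ZMod n) = a - (k : ZMod n)) →
      (u + (g : ZMod n) = a ∨ u + (g : ZMod n) = a - (k : ZMod n)) → False := by
    intro c e g hc he hg hce hcg heg h1 h2 h3
    rcases htwo c e hc he hce h1 h2 with ⟨hca, heb⟩ | ⟨hea, hcb⟩
    · rcases h3 with h3 | h3
      · exact (fun h => hcg ((hEq u c g hc hg).mp h)) (hca.trans h3.symm)
      · exact (fun h => heg ((hEq u e g he hg).mp h)) (heb.trans h3.symm)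
    · rcases h3 with h3 | h3
      · exact (fun h => heg ((hEq u e g he hg).mp h)) (hea.trans h3.symm)
      · exact (fun h => hcg ((hEq u c g hc hg).mp h)) (hcb.trans h3.symm)
  -- the 2k ≠ 0 fact
  have h2k : ((2 * k : ℕ) : ZMod n) ≠ 0 := hcast0 _ (by omega) (by omega)
  rcases lt_or_ge d k with hdk | hdk
  · -- case A : d ∈ [1, k-1]
    rcases Nat.lt_or_ge 1 d with hd2 | hd1
    · -- d ≥ 2 : three elements u, u+1, u+(d+k-1)
      have hk3 : 2 ≤ k := by omega
      apply hthree 0 1 (d + k - 1) (by omega) (by omega) (by omega) (by omega) (by omega) (by omega)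
      · apply hΔ; left
        constructor
        · rw [hmemu 0 (by omega)]; omega
        · rw [hmemu' 0 (by omega), if_neg (by omega)]; omega
      · apply hΔ; left
        constructor
        · rw [hmemu 1 (by omega)]; omega
        · rw [hmemu' 1 (by omega), if_neg (by omega)]; omega
      · apply hΔ; right
        constructor
        · rw [hmemu' (d + k - 1) (by omega), if_pos (by omega)]; omega
        · rw [hmemu (d + k - 1) (by omega)]; omega
    · -- d = 1 : Δ ⊇ {u, u + k}
      have hd1' : d = 1 := by omega
      have h1 : u + ((0 : ℕ) : ZMod n) = a ∨ u + ((0 : ℕ) : ZMod n) = a - (k : ZMod n) := by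
        apply hΔ; left
        constructor
        · rw [hmemu 0 (by omega)]; omega
        · rw [hmemu' 0 (by omega), if_neg (by omega)]; omega
      have h2 : u + ((k : ℕ) : ZMod n) = a ∨ u + ((k : ℕ) : ZMod n) = a - (k : ZMod n) := by
        apply hΔ; right
        constructor
        · rw [hmemu' k (by omega), if_pos (by omega)]; omega
        · rw [hmemu k (by omega)]; omega
      rcases htwo 0 k (by omega) (by omega) (by omega) h1 h2 with ⟨hca, heb⟩ | ⟨hea, hcb⟩
      · -- u = a, u + k = a - k : 2k ≡ 0
        apply h2k
        have : u + ((k : ℕ) : ZMod n) = u - ((k : ℕ) : ZMod n) := by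
          rw [heb, ← hca]; ring
        have h5 : ((2 * k : ℕ) : ZMod n) = 0 := by
          have := sub_eq_zero.mpr this
          push_cast at this ⊢
          linear_combination this
        exact h5
      · -- u + k = a, u = a - k : t = a - 1
        apply ht2
        rw [← hea]
        have : ((k : ℕ) : ZMod n) = ((k - 1 : ℕ) : ZMod n) + 1 := by
          rw [Nat.cast_sub (by omega)]
          push_cast; ring
        rw [this]; ring
  rcases lt_or_ge (n - d) k with hmk | hmk
  · -- case B : m = n - d ∈ [1, k-1]
    set m : ℕ := n - d with hm
    have hmemu'' : ∀ c : ℕ, c < n →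
        (u + (c : ZMod n) ∈ arc n k u' ↔ (if c + m < n then c + m else c + m - n) < k) := by
      intro c hc
      rw [hmemu' c hc]
      by_cases h : d ≤ c
      · rw [if_pos h, if_neg (by omega)]
        constructor <;> intro <;> omega
      · rw [if_neg h, if_pos (by omega)]
        constructor <;> intro <;> omega
    have hm1 : 1 ≤ m := by omega
    rcases Nat.lt_or_ge 1 m with hm2 | hm1'
    · -- m ≥ 2 : three elements u + (k-1), u + (k-2), u + d (= u')
      have hk3 : 2 ≤ k := by omega
      apply hthree (k - 1) (k - 2) d (by omega) (by omega) (by omega) (by omega) (by omega) (by omega)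
      · apply hΔ; left
        constructor
        · rw [hmemu (k - 1) (by omega)]; omega
        · rw [hmemu'' (k - 1) (by omega), if_pos (by omega)]; omega
      · apply hΔ; left
        constructor
        · rw [hmemu (k - 2) (by omega)]; omega
        · rw [hmemu'' (k - 2) (by omega), if_pos (by omega)]; omega
      · apply hΔ; right
        constructor
        · rw [hmemu'' d (by omega)]
          by_cases hdm : d + m < n <;> simp [hdm] <;> omega
        · rw [hmemu d (by omega)]; omega
    · -- m = 1 : Δ ⊇ {u + (k-1), u + (n-1)} with u+(k-1) = t
      have h1 : u + ((k - 1 : ℕ) : ZMod n) = a ∨ u + ((k - 1 : ℕ) : ZMod n) = a - (k : ZMod n) := by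
        apply hΔ; left
        constructor
        · rw [hmemu (k - 1) (by omega)]; omega
        · rw [hmemu'' (k - 1) (by omega), if_pos (by omega)]; omega
      have h2 : u + ((n - 1 : ℕ) : ZMod n) = a ∨ u + ((n - 1 : ℕ) : ZMod n) = a - (k : ZMod n) := by
        apply hΔ; right
        constructor
        · rw [hmemu'' (n - 1) (by omega), if_neg (by omega)]; omega
        · rw [hmemu (n - 1) (by omega)]; omega
      rcases htwo (k - 1) (n - 1) (by omega) (by omega) (by omega) h1 h2 with ⟨hca, heb⟩ | ⟨hea, hcb⟩
      · exact ht1 hca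
      · -- u + (k-1) = a - k and u + (n-1) = a : 2k ≡ 0
        apply h2k
        have h5 : u + ((k - 1 : ℕ) : ZMod n) = u + ((n - 1 : ℕ) : ZMod n) - ((k : ℕ) : ZMod n) := by
          rw [hcb, hea]
        have h6 : ((k - 1 : ℕ) : ZMod n) - ((n - 1 : ℕ) : ZMod n) + ((k : ℕ) : ZMod n) = 0 := by
          linear_combination h5
        rw [Nat.cast_sub (show 1 ≤ k by omega), Nat.cast_sub (show 1 ≤ n by omega)] at h6
        rw [show ((2 * k : ℕ) : ZMod n) = ((k:ℕ) : ZMod n) + ((k:ℕ):ZMod n) from by push_cast; ring]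
        have hn0 : ((n : ℕ) : ZMod n) = 0 := ZMod.natCast_self n
        push_cast at h6 ⊢
        linear_combination h6 + hn0
  · -- case C : arcs disjoint, k ≥ 2 gives three elements u, u+1, u+d; k = 1 direct
    have hdisj : ∀ c : ℕ, c < k → (u + (c : ZMod n) ∉ arc n k u') := by
      intro c hck
      rw [hmemu' c (by omega)]
      by_cases h : d ≤ c <;> simp [h] <;> omega
    have hdisj' : ∀ c : ℕ, c < k → (u + ((d + c : ℕ) : ZMod n) ∉ arc n k u) := by
      intro c hck
      rw [hmemu (d + c) (by omega)]  -- d + c might be ≥ n!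
      omega
    rcases Nat.lt_or_ge 1 k with hk2 | hk1
    · apply hthree 0 1 d (by omega) (by omega) (by omega) (by omega) (by omega) (by omega)
      · apply hΔ; left
        exact ⟨by rw [hmemu 0 (by omega)]; omega, hdisj 0 (by omega)⟩
      · apply hΔ; left
        exact ⟨by rw [hmemu 1 (by omega)]; omega, hdisj 1 (by omega)⟩
      · apply hΔ; right
        constructor
        · rw [hmemu' d (by omega), if_pos (by omega)]; omega
        · rw [hmemu d (by omega)]; omega
    · -- k = 1
      have hk1' : k = 1 := by omega
      have h1 : u + ((0 : ℕ) : ZMod n) = a ∨ u + ((0 : ℕ) : ZMod n) = a - (k : ZMod n) := by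
        apply hΔ; left
        exact ⟨by rw [hmemu 0 (by omega)]; omega, hdisj 0 (by omega)⟩
      rcases h1 with h1 | h1
      · apply ht1
        rw [show (k - 1 : ℕ) = 0 from by omega]
        exact h1
      · apply ht2
        rw [show (k - 1 : ℕ) = 0 from by omega]
        rw [h1, hk1']
        push_cast
        ring

lemma exists_equiv_image {α β : Type*} [Fintype α] [Fintype β] [DecidableEq α] [DecidableEq β]
    (hcard : Fintype.card α = Fintype.card β) {S : Finset α} {A : Finset β}
    (hSA : S.card = A.card) : ∃ e : α ≃ β, S.image e = A := by
  have e₁ : {x // x ∈ S} ≃ {y // y ∈ A} := Finset.equivOfCardEq hSA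
  have hc : Sᶜ.card = Aᶜ.card := by
    rw [Finset.card_compl, Finset.card_compl, hcard, hSA]
  have e₂ : {x // x ∈ Sᶜ} ≃ {y // y ∈ Aᶜ} := Finset.equivOfCardEq hc
  have e₂p : {x // ¬ x ∈ S} ≃ {y // ¬ y ∈ A} :=
    ((Equiv.subtypeEquivRight (fun x => Finset.mem_compl)).symm.trans e₂).trans
      (Equiv.subtypeEquivRight (fun y => Finset.mem_compl))
  refine ⟨(Equiv.sumCompl (· ∈ S)).symm.trans ((e₁.sumCongr e₂p).trans (Equiv.sumCompl (· ∈ A))), ?_⟩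
  apply Finset.eq_of_subset_of_card_le
  · intro y hy
    obtain ⟨x, hx, rfl⟩ := Finset.mem_image.mp hy
    simp only [Equiv.trans_apply]
    rw [Equiv.sumCompl_symm_apply_of_pos hx]
    simp only [Equiv.sumCongr_apply, Sum.map_inl, Equiv.sumCompl_apply_inl]
    exact (e₁ ⟨x, hx⟩).2
  · rw [Finset.card_image_of_injective _ (Equiv.injective _), hSA]

def Good (𝒜 : Finset (Finset (Fin n))) (k : ℕ) (τ : ZMod n ≃ Fin n) : Finset (ZMod n) :=
  univ.filter (fun s => (arc n k s).image τ ∈ 𝒜)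

lemma sum_good (hk : 1 ≤ k) (hn : 2*k+1 ≤ n) (𝒜 : Finset (Finset (Fin n)))
    (hsize : ∀ A ∈ 𝒜, A.card = k) (hAcard : 𝒜.card = (n-1).choose (k-1)) :
    ∑ τ : (ZMod n ≃ Fin n), (Good 𝒜 k τ).card = k * (n).factorial := by
  have hkn : k ≤ n := by omega
  have hn1 : 1 ≤ n := by omega
  set N : ZMod n → Finset (Fin n) → ℕ :=
    fun s A => (univ.filter (fun τ : ZMod n ≃ Fin n => (arc n k s).image τ = A)).card with hN
  have hNconst : ∀ (s : ZMod n) (A A' : Finset (Fin n)), A.card = A'.card → N s A = N s A' := by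
    intro s A A' hAA'
    obtain ⟨g, hg⟩ := exists_equiv_image (rfl) hAA'
    rw [hN]
    refine Finset.card_bij' (fun τ _ => τ.trans g) (fun τ _ => τ.trans g.symm) ?_ ?_ ?_ ?_
    · intro τ hτ
      rw [Finset.mem_filter] at hτ ⊢
      refine ⟨Finset.mem_univ _, ?_⟩
      rw [show ((τ.trans g : ZMod n ≃ Fin n) : ZMod n → Fin n) = (g : Fin n → Fin n) ∘ τ from rfl,
        ← Finset.image_image, hτ.2, hg]
    · intro τ hτ
      rw [Finset.mem_filter] at hτ ⊢
      refine ⟨Finset.mem_univ _, ?_⟩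
      have hg' : A'.image g.symm = A := by
        rw [← hg, Finset.image_image]
        simp
      rw [show ((τ.trans g.symm : ZMod n ≃ Fin n) : ZMod n → Fin n) = (g.symm : Fin n → Fin n) ∘ τ from rfl,
        ← Finset.image_image, hτ.2, hg']
    · intro τ hτ
      ext x
      simp
    · intro τ hτ
      ext x
      simp
  have hcequiv : Fintype.card (ZMod n ≃ Fin n) = n.factorial := by
    rw [Fintype.card_equiv (Fintype.equivOfCardEq (by simp [ZMod.card]))]
    simp [ZMod.card]
  have hNsum : ∀ s : ZMod n, ∑ A ∈ powersetCard k (univ : Finset (Fin n)), N s A = n.factorial := by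
    intro s
    rw [hN, ← hcequiv, ← Finset.card_univ]
    exact (Finset.card_eq_sum_card_fiberwise (fun τ _ => Finset.mem_powersetCard_univ.mpr
      (by rw [Finset.card_image_of_injective _ (Equiv.injective τ), card_arc hkn]))).symm
  have hNval : ∀ (s : ZMod n) (A : Finset (Fin n)), A.card = k → (n.choose k) * N s A = n.factorial := by
    intro s A hA
    have h1 : ∑ A' ∈ powersetCard k (univ : Finset (Fin n)), N s A' =
        ∑ A' ∈ powersetCard k (univ : Finset (Fin n)), N s A := by
      apply Finset.sum_congr rfl
      intro A' hA'
      exact hNconst s A' A (by rw [Finset.mem_powersetCard_univ.mp hA', hA])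
    have h2 := hNsum s
    rw [h1, Finset.sum_const, smul_eq_mul, Finset.card_powersetCard, Finset.card_univ,
      Fintype.card_fin] at h2
    exact h2
  -- now the main computation
  have hmain : ∀ τ : ZMod n ≃ Fin n, (Good 𝒜 k τ).card
      = ∑ s : ZMod n, if (arc n k s).image τ ∈ 𝒜 then 1 else 0 := by
    intro τ
    rw [Good, Finset.card_filter]
  have hswap : ∑ τ : (ZMod n ≃ Fin n), (Good 𝒜 k τ).card
      = ∑ s : ZMod n, ∑ A ∈ 𝒜, N s A := by
    rw [Finset.sum_congr rfl (fun τ _ => hmain τ), Finset.sum_comm]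
    apply Finset.sum_congr rfl
    intro s _
    rw [← Finset.card_filter]
    rw [Finset.card_eq_sum_card_fiberwise (f := fun τ : ZMod n ≃ Fin n => (arc n k s).image τ)
      (s := Finset.univ.filter (fun τ : ZMod n ≃ Fin n => (arc n k s).image τ ∈ 𝒜))
      (t := 𝒜) (fun τ hτ => (Finset.mem_filter.mp hτ).2)]
    apply Finset.sum_congr rfl
    intro A hA
    rw [hN, Finset.filter_filter]
    congr 1
    ext τ
    simp only [Finset.mem_filter, Finset.mem_univ, true_and]
    exact ⟨fun h => h.2, fun h => ⟨h ▸ hA, h⟩⟩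
  -- multiply both sides by choose
  have hchoosepos : 0 < n.choose k := Nat.choose_pos hkn
  apply Nat.eq_of_mul_eq_mul_left hchoosepos
  rw [hswap, Finset.mul_sum]
  have : ∀ s : ZMod n, (n.choose k) * ∑ A ∈ 𝒜, N s A = (n-1).choose (k-1) * n.factorial := by
    intro s
    rw [Finset.mul_sum]
    have h3 : ∀ A ∈ 𝒜, (n.choose k) * N s A = n.factorial := fun A hA => hNval s A (hsize A hA)
    rw [Finset.sum_congr rfl h3, Finset.sum_const, smul_eq_mul, hAcard]
  rw [Finset.sum_congr rfl (fun s _ => this s), Finset.sum_const, smul_eq_mul, Finset.card_univ,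
    ZMod.card]
  -- n * ((n-1).choose (k-1) * n!) = choose n k * (k * n!)
  have hid : n * (n-1).choose (k-1) = n.choose k * k := by
    have := Nat.add_one_mul_choose_eq (n-1) (k-1)
    have e1 : n - 1 + 1 = n := by omega
    have e2 : k - 1 + 1 = k := by omega
    rw [e1, e2] at this
    exact this
  calc n * ((n-1).choose (k-1) * n.factorial) = (n * (n-1).choose (k-1)) * n.factorial := by ring
  _ = (n.choose k * k) * n.factorial := by rw [hid]
  _ = n.choose k * (k * n.factorial) := by ring


lemma good_eq_arc (hk : 1 ≤ k) (hn : 2*k+1 ≤ n) (𝒜 : Finset (Finset (Fin n)))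
    (hsize : ∀ A ∈ 𝒜, A.card = k)
    (hint : ∀ A ∈ 𝒜, ∀ B ∈ 𝒜, ¬ Disjoint A B)
    (hAcard : 𝒜.card = (n-1).choose (k-1)) :
    ∀ τ : ZMod n ≃ Fin n, ∃ u, Good 𝒜 k τ = arc n k u := by
  have hkn : k ≤ n := by omega
  have hpair : ∀ τ : ZMod n ≃ Fin n, ∀ s ∈ Good 𝒜 k τ, ∀ s' ∈ Good 𝒜 k τ,
      (s' - s).val < k ∨ (s - s').val < k := by
    intro τ s hs s' hs'
    rw [Good, Finset.mem_filter] at hs hs'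
    by_contra hcon
    push_neg at hcon
    have hdisj := arc_disjoint hkn (not_lt.mpr hcon.1) (not_lt.mpr hcon.2)
    have hdisj2 := (Finset.disjoint_image (Equiv.injective τ)).mpr hdisj
    exact hint _ hs.2 _ hs'.2 hdisj2
  have hcequiv : Fintype.card (ZMod n ≃ Fin n) = n.factorial := by
    rw [Fintype.card_equiv (Fintype.equivOfCardEq (by simp [ZMod.card]))]
    simp [ZMod.card]
  have hcards : ∀ τ : ZMod n ≃ Fin n, (Good 𝒜 k τ).card = k := by
    by_contra h
    push_neg at h
    obtain ⟨τ₀, hτ₀⟩ := h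
    have hle : ∀ τ : ZMod n ≃ Fin n, (Good 𝒜 k τ).card ≤ k :=
      fun τ => (close_family hk hn (hpair τ)).1
    have hlt := Finset.sum_lt_sum (s := (univ : Finset (ZMod n ≃ Fin n)))
      (f := fun τ => (Good 𝒜 k τ).card) (g := fun _ => k)
      (fun τ _ => hle τ) ⟨τ₀, Finset.mem_univ _, lt_of_le_of_ne (hle τ₀) hτ₀⟩
    rw [sum_good hk hn 𝒜 hsize hAcard, Finset.sum_const, smul_eq_mul, Finset.card_univ,
      hcequiv] at hlt
    rw [Nat.mul_comm n.factorial k] at hlt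
    exact lt_irrefl _ hlt
  exact fun τ => (close_family hk hn (hpair τ)).2 (hcards τ)

lemma image_swap_mem {α : Type*} [DecidableEq α] {S : Finset α} {a b : α}
    (ha : a ∈ S) (hb : b ∈ S) : S.image (Equiv.swap a b) = S := by
  apply Finset.eq_of_subset_of_card_le
  · intro y hy
    obtain ⟨x, hx, rfl⟩ := Finset.mem_image.mp hy
    rcases eq_or_ne x a with rfl | hxa
    · rwa [Equiv.swap_apply_left]
    rcases eq_or_ne x b with rfl | hxb
    · rwa [Equiv.swap_apply_right]
    · rwa [Equiv.swap_apply_of_ne_of_ne hxa hxb]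
  · rw [Finset.card_image_of_injective _ (Equiv.injective _)]

lemma image_swap_not_mem {α : Type*} [DecidableEq α] {S : Finset α} {a b : α}
    (ha : a ∉ S) (hb : b ∉ S) : S.image (Equiv.swap a b) = S := by
  have heq : ∀ x ∈ S, Equiv.swap a b x = x := fun x hx =>
    Equiv.swap_apply_of_ne_of_ne (fun h => ha (h ▸ hx)) (fun h => hb (h ▸ hx))
  calc S.image (Equiv.swap a b) = S.image id := Finset.image_congr (fun x hx => heq x hx)
  _ = S := Finset.image_id

lemma image_swap_arc (hk : 1 ≤ k) (hn : 2*k+1 ≤ n) (τ : ZMod n ≃ Fin n) (i s : ZMod n)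
    (hs1 : s ≠ i + 1) (hs2 : s ≠ i + 1 - ((k : ℕ) : ZMod n)) :
    (arc n k s).image ((Equiv.swap i (i+1)).trans τ) = (arc n k s).image τ := by
  have hkn : k ≤ n := by omega
  rw [show ((((Equiv.swap i (i+1)).trans τ) : ZMod n ≃ Fin n) : ZMod n → Fin n)
      = (τ : ZMod n → Fin n) ∘ (Equiv.swap i (i+1)) from rfl, ← Finset.image_image]
  have hiff : (i ∈ arc n k s ↔ i + 1 ∈ arc n k s) := by
    constructor
    · intro hi
      by_contra hi1
      rw [mem_arc hkn] at hi hi1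
      set c := (i - s).val with hc
      have hico : i - s = ((c : ℕ) : ZMod n) := (ZMod.natCast_rightInverse _).symm
      have hi1c : i + 1 - s = ((c + 1 : ℕ) : ZMod n) := by
        rw [show i + 1 - s = (i - s) + 1 by ring, hico]; push_cast; ring
      have hv1 : (i + 1 - s).val = c + 1 := by
        rw [hi1c, ZMod.val_cast_of_lt (by omega)]
      have hck : c = k - 1 := by omega
      apply hs2
      have : s = i - ((c : ℕ) : ZMod n) := by
        rw [← hico]; ring
      rw [this, hck]
      rw [show ((k : ℕ) : ZMod n) = (((k-1) : ℕ) : ZMod n) + 1 from by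
        rw [Nat.cast_sub (by omega)]; push_cast; ring]
      ring
    · intro hi1
      by_contra hi
      rw [mem_arc hkn] at hi hi1
      set c := (i + 1 - s).val with hc
      have hc0 : c ≠ 0 := by
        intro h0
        apply hs1
        have : i + 1 - s = 0 := by
          rw [← ZMod.natCast_rightInverse (i + 1 - s), ← hc, h0]; simp
        have := sub_eq_zero.mp this
        exact this.symm
      have hico : i + 1 - s = ((c : ℕ) : ZMod n) := (ZMod.natCast_rightInverse _).symm
      have hic : i - s = ((c - 1 : ℕ) : ZMod n) := by
        rw [show i - s = (i + 1 - s) - 1 by ring, hico, Nat.cast_sub (by omega)]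
        push_cast; ring
      have : (i - s).val = c - 1 := by
        rw [hic, ZMod.val_cast_of_lt (by omega)]
      omega
  congr 1
  by_cases hi : i ∈ arc n k s
  · exact image_swap_mem hi (hiff.mp hi)
  · exact image_swap_not_mem hi (fun h => hi (hiff.mpr h))

lemma good_swap (hk : 1 ≤ k) (hn : 2*k+1 ≤ n) (𝒜 : Finset (Finset (Fin n)))
    (τ : ZMod n ≃ Fin n) (i : ZMod n) {u u' : ZMod n}
    (hGτ : Good 𝒜 k τ = arc n k u)
    (hGτ' : Good 𝒜 k ((Equiv.swap i (i+1)).trans τ) = arc n k u')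
    (ht1 : u + ((k - 1 : ℕ) : ZMod n) ≠ i) (ht2 : u + ((k - 1 : ℕ) : ZMod n) ≠ i + 1) :
    u' = u := by
  have hkn : k ≤ n := by omega
  apply arc_injective hk hn
  symm
  apply arc_stable hk hn (a := i + 1) ?hD ht2 (by
    rw [show i + 1 - 1 = i by ring]; exact ht1)
  intro s hs
  by_contra hcon
  push_neg at hcon
  have himg := image_swap_arc hk hn τ i s hcon.1 (by
    rw [show i + 1 - ((k : ℕ) : ZMod n) = i + 1 - ((k : ℕ) : ZMod n) from rfl] at hcon
    exact hcon.2)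
  rcases hs with ⟨h1, h2⟩ | ⟨h1, h2⟩
  · rw [← hGτ, Good, Finset.mem_filter] at h1
    rw [← hGτ', Good, Finset.mem_filter] at h2
    exact h2 ⟨Finset.mem_univ _, himg ▸ h1.2⟩
  · rw [← hGτ', Good, Finset.mem_filter] at h1
    rw [← hGτ, Good, Finset.mem_filter] at h2
    exact h2 ⟨Finset.mem_univ _, himg.symm ▸ h1.2⟩


open Classical in
lemma ekr_unique (hk : 1 ≤ k) (hn : 2*k+1 ≤ n) (𝒜 : Finset (Finset (Fin n)))
    (hsize : ∀ A ∈ 𝒜, A.card = k)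
    (hint : ∀ A ∈ 𝒜, ∀ B ∈ 𝒜, ¬ Disjoint A B)
    (hAcard : 𝒜.card = (n-1).choose (k-1)) :
    ∃ x : Fin n, ∀ A : Finset (Fin n), A.card = k → (A ∈ 𝒜 ↔ x ∈ A) := by
  have hkn : k ≤ n := by omega
  have hzf : Fintype.card (ZMod n) = Fintype.card (Fin n) := by simp [ZMod.card]
  choose uof hu using good_eq_arc hk hn 𝒜 hsize hint hAcard
  set τ₀ : ZMod n ≃ Fin n := Fintype.equivOfCardEq hzf with hτ₀
  set t₀ : ZMod n := uof τ₀ + ((k - 1 : ℕ) : ZMod n) with ht₀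
  set x₀ : Fin n := τ₀ t₀ with hx₀
  -- cast inequality helper
  have hne_add : ∀ m : ℕ, 1 ≤ m → m ≤ n - 1 → t₀ + (m : ZMod n) ≠ t₀ := by
    intro m h1 h2 h
    have h3 : ((m : ℕ) : ZMod n) = 0 := by
      have := add_right_cancel (b := (0:ZMod n)) (by simpa using h)
      simpa using this
    have := congrArg ZMod.val h3
    rw [ZMod.val_cast_of_lt (by omega), ZMod.val_zero] at this
    omega
  -- invariant
  set inv : (ZMod n ≃ Fin n) → Prop := fun τ => uof τ = uof τ₀ ∧ τ t₀ = x₀ with hinvdef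
  have swapImp : ∀ (i : ZMod n) (τ : ZMod n ≃ Fin n), t₀ ≠ i → t₀ ≠ i + 1 → inv τ →
      inv ((Equiv.swap i (i+1)).trans τ) := by
    intro i τ hi hi1 hτ
    obtain ⟨h1, h2⟩ := hτ
    constructor
    · refine good_swap hk hn 𝒜 τ i (by rw [hu τ, h1]) (hu _) ?_ ?_ |>.trans h1
      · rw [h1, ← ht₀]; exact hi
      · rw [h1, ← ht₀]; exact hi1
    · show τ (Equiv.swap i (i+1) t₀) = x₀
      rw [Equiv.swap_apply_of_ne_of_ne hi hi1, h2]
  -- generators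
  set Gen : Set (Equiv.Perm (ZMod n)) :=
    {g | ∃ m : ℕ, 1 ≤ m ∧ m ≤ n - 2 ∧ g = Equiv.swap (t₀ + (m : ZMod n)) (t₀ + (m : ZMod n) + 1)}
    with hGen
  -- Q is preserved along closure
  set Q : Equiv.Perm (ZMod n) → Prop := fun g => ∀ τ : ZMod n ≃ Fin n,
    (inv τ ↔ inv ((g : Equiv.Perm (ZMod n)).trans τ)) with hQ
  have hQclosure : ∀ g ∈ Subgroup.closure Gen, Q g := by
    intro g hg
    induction hg using Subgroup.closure_induction with
    | mem g hgen =>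
      obtain ⟨m, hm1, hm2, rfl⟩ := hgen
      set i : ZMod n := t₀ + (m : ZMod n) with hi
      have hti : t₀ ≠ i := fun h => hne_add m hm1 (by omega) h.symm
      have hti1 : t₀ ≠ i + 1 := by
        intro h
        apply hne_add (m+1) (by omega) (by omega)
        rw [show ((m + 1 : ℕ) : ZMod n) = (m : ZMod n) + 1 from by push_cast; ring, ← add_assoc, ← hi, ← h]
      intro τ
      constructor
      · exact swapImp i τ hti hti1
      · intro h
        have h2 := swapImp i _ hti hti1 h
        have h3 : (Equiv.swap i (i+1)).trans ((Equiv.swap i (i+1)).trans τ) = τ := by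
          ext x
          simp [Equiv.swap_apply_self]
        rwa [h3] at h2
    | one =>
      intro τ
      have : ((1 : Equiv.Perm (ZMod n)) : Equiv.Perm (ZMod n)).trans τ = τ := by
        ext x; rfl
      rw [this]
    | mul g₁ g₂ hg₁ hg₂ ih₁ ih₂ =>
      intro τ
      have h3 : (g₂ : Equiv.Perm (ZMod n)).trans ((g₁ : Equiv.Perm (ZMod n)).trans τ)
          = ((g₁ * g₂ : Equiv.Perm (ZMod n)) : Equiv.Perm (ZMod n)).trans τ := by
        ext x; rfl
      exact (ih₁ τ).trans ((ih₂ ((g₁ : Equiv.Perm (ZMod n)).trans τ)).trans (by rw [h3]))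
    | inv g hg ih =>
      intro τ
      have h3 : (g : Equiv.Perm (ZMod n)).trans ((g⁻¹ : Equiv.Perm (ZMod n)).trans τ) = τ :=
        Equiv.ext fun x => by simp
      have := ih ((g⁻¹ : Equiv.Perm (ZMod n)).trans τ)
      rw [h3] at this
      exact this.symm
  -- swaps avoiding t₀ lie in the closure
  have hcast_ne : ∀ γ δ : ℕ, γ < n → δ < n → γ ≠ δ → t₀ + (γ : ZMod n) ≠ t₀ + (δ : ZMod n) := by
    intro γ δ hγ hδ hne h
    have h2 : ((γ : ℕ) : ZMod n) = δ := add_left_cancel h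
    have := congrArg ZMod.val h2
    rw [ZMod.val_cast_of_lt hγ, ZMod.val_cast_of_lt hδ] at this
    exact hne this
  have swap_cast : ∀ (D γ δ : ℕ), δ - γ = D → 1 ≤ γ → γ < δ → δ ≤ n - 1 →
      Equiv.swap (t₀ + (γ : ZMod n)) (t₀ + (δ : ZMod n)) ∈ Subgroup.closure Gen := by
    intro D
    induction D using Nat.strong_induction_on with
    | _ D ih =>
      intro γ δ hD h1 h2 h3
      rcases eq_or_lt_of_le (show γ + 1 ≤ δ by omega) with heq | hlt
      · apply Subgroup.subset_closure
        refine ⟨γ, h1, by omega, ?_⟩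
        rw [← heq]
        congr 1
        push_cast
        ring
      · have hsw1 : Equiv.swap (t₀ + ((δ - 1 : ℕ) : ZMod n)) (t₀ + (δ : ZMod n))
            ∈ Subgroup.closure Gen := by
          apply Subgroup.subset_closure
          refine ⟨δ - 1, by omega, by omega, ?_⟩
          congr 1
          rw [Nat.cast_sub (by omega)]
          push_cast
          ring
        have hsw2 : Equiv.swap (t₀ + (γ : ZMod n)) (t₀ + ((δ - 1 : ℕ) : ZMod n))
            ∈ Subgroup.closure Gen := ih (δ - 1 - γ) (by omega) γ (δ - 1) rfl h1 (by omega) (by omega)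
        have hmem := mul_mem (mul_mem hsw1 hsw2) hsw1
        rw [Equiv.swap_mul_swap_mul_swap
          (hcast_ne γ (δ-1) (by omega) (by omega) (by omega))
          (hcast_ne γ δ (by omega) (by omega) (by omega))] at hmem
        rwa [Equiv.swap_comm] at hmem
  have swap_any : ∀ c d : ZMod n, c ≠ t₀ → d ≠ t₀ → c ≠ d →
      Equiv.swap c d ∈ Subgroup.closure Gen := by
    intro c d hc hd hcd
    have hc' : c = t₀ + (((c - t₀).val : ℕ) : ZMod n) := by
      rw [ZMod.natCast_rightInverse (c - t₀)]; ring
    have hd' : d = t₀ + (((d - t₀).val : ℕ) : ZMod n) := by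
      rw [ZMod.natCast_rightInverse (d - t₀)]; ring
    have hcv : 1 ≤ (c - t₀).val ∧ (c - t₀).val ≤ n - 1 := by
      have h1 := ZMod.val_lt (c - t₀)
      have h2 : (c - t₀).val ≠ 0 := by
        intro h0
        apply hc
        have : c - t₀ = 0 := by rw [← ZMod.natCast_rightInverse (c - t₀), h0]; simp
        have := sub_eq_zero.mp this
        exact this
      omega
    have hdv : 1 ≤ (d - t₀).val ∧ (d - t₀).val ≤ n - 1 := by
      have h1 := ZMod.val_lt (d - t₀)
      have h2 : (d - t₀).val ≠ 0 := by
        intro h0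
        apply hd
        have : d - t₀ = 0 := by rw [← ZMod.natCast_rightInverse (d - t₀), h0]; simp
        have := sub_eq_zero.mp this
        exact this
      omega
    have hvv : (c - t₀).val ≠ (d - t₀).val := by
      intro h
      apply hcd
      rw [hc', hd', h]
    rcases lt_or_gt_of_ne hvv with h | h
    · rw [hc', hd']
      exact swap_cast _ _ _ rfl hcv.1 h hdv.2
    · rw [hc', hd', Equiv.swap_comm]
      exact swap_cast _ _ _ rfl hdv.1 h hcv.2
  have stab_le : ∀ (m : ℕ) (ρ : Equiv.Perm (ZMod n)),
      (univ.filter (fun x => ρ x ≠ x)).card ≤ m → ρ t₀ = t₀ → ρ ∈ Subgroup.closure Gen := by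
    intro m
    induction m with
    | zero =>
      intro ρ hc hρ
      have : ρ = 1 := by
        ext x
        by_contra hx
        have : x ∈ univ.filter (fun x => ρ x ≠ x) := by
          simp only [Finset.mem_filter, Finset.mem_univ, true_and]
          exact hx
        have h2 := Finset.card_pos.mpr ⟨x, this⟩
        omega
      rw [this]
      exact one_mem _
    | succ m ih =>
      intro ρ hc hρ
      by_cases hall : ∀ x, ρ x = x
      · have : ρ = 1 := Equiv.ext hall
        rw [this]; exact one_mem _
      push_neg at hall
      obtain ⟨c, hcne⟩ := hall
      have hct : c ≠ t₀ := fun h => hcne (by rw [h, hρ])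
      have hρct : ρ c ≠ t₀ := by
        intro h
        apply hcne
        have : ρ c = ρ t₀ := by rw [h, hρ]
        have := ρ.injective this
        rw [this] at h ⊢
        exact hρ
      set ρ' : Equiv.Perm (ZMod n) := Equiv.swap c (ρ c) * ρ with hρ'
      have hρ't : ρ' t₀ = t₀ := by
        rw [hρ']
        show Equiv.swap c (ρ c) (ρ t₀) = t₀
        rw [hρ, Equiv.swap_apply_of_ne_of_ne (Ne.symm hct) (Ne.symm hρct)]
      have hsub : univ.filter (fun x => ρ' x ≠ x) ⊆ (univ.filter (fun x => ρ x ≠ x)).erase c := by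
        intro x hx
        simp only [Finset.mem_filter, Finset.mem_univ, true_and] at hx
        rw [Finset.mem_erase]
        constructor
        · intro hxc
          apply hx
          rw [hxc, hρ']
          show Equiv.swap c (ρ c) (ρ c) = c
          exact Equiv.swap_apply_right _ _
        · simp only [Finset.mem_filter, Finset.mem_univ, true_and]
          intro hfix
          apply hx
          rw [hρ']
          show Equiv.swap c (ρ c) (ρ x) = x
          rw [hfix]
          apply Equiv.swap_apply_of_ne_of_ne
          · intro h; rw [h] at hfix; exact hcne hfix
          · intro h
            have hxc : x = c := ρ.injective (hfix.trans h)
            rw [hxc] at hfix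
            exact hcne hfix
      have hcmem : c ∈ univ.filter (fun x => ρ x ≠ x) := by
        simp only [Finset.mem_filter, Finset.mem_univ, true_and]; exact hcne
      have hcard : (univ.filter (fun x => ρ' x ≠ x)).card ≤ m := by
        have h1 := Finset.card_le_card hsub
        have h2 : ((univ.filter (fun x => ρ x ≠ x)).erase c).card
            = (univ.filter (fun x => ρ x ≠ x)).card - 1 := Finset.card_erase_of_mem hcmem
        omega
      have hρ'mem := ih ρ' hcard hρ't
      have : ρ = Equiv.swap c (ρ c) * ρ' := by
        rw [hρ', ← mul_assoc, Equiv.swap_mul_self, one_mul]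
      rw [this]
      exact mul_mem (swap_any c (ρ c) hct hρct (Ne.symm hcne)) hρ'mem
  -- key propagation
  have key : ∀ τ : ZMod n ≃ Fin n, τ t₀ = x₀ → uof τ = uof τ₀ := by
    intro τ hτ
    set ρ : Equiv.Perm (ZMod n) := τ.trans τ₀.symm with hρ
    have hρt : ρ t₀ = t₀ := by
      rw [hρ]
      show τ₀.symm (τ t₀) = t₀
      rw [hτ, hx₀, Equiv.symm_apply_apply]
    have hρmem := stab_le _ ρ le_rfl hρt
    have hQρ := hQclosure ρ hρmem
    have hτeq : (ρ : Equiv.Perm (ZMod n)).trans τ₀ = τ :=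
      Equiv.ext fun x => by simp [hρ]
    have hinv₀ : inv τ₀ := ⟨rfl, rfl⟩
    have := (hQρ τ₀).mp hinv₀
    rw [hτeq] at this
    exact this.1
  -- star extraction
  refine ⟨x₀, fun A hA => ?_⟩
  constructor
  · -- A ∈ 𝒜 → x₀ ∈ A
    intro hAmem
    by_contra hx₀A
    obtain ⟨τ', hτ'⟩ := exists_equiv_image (S := arc n k (t₀ + 1)) (A := A) hzf
      (by rw [card_arc hkn, hA])
    set p : ZMod n := τ'.symm x₀ with hp
    have hpA : p ∉ arc n k (t₀ + 1) := by
      intro hmem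
      apply hx₀A
      rw [← hτ']
      exact Finset.mem_image.mpr ⟨p, hmem, by rw [hp, Equiv.apply_symm_apply]⟩
    have ht₀A : t₀ ∉ arc n k (t₀ + 1) := by
      rw [mem_arc hkn]
      have : t₀ - (t₀ + 1) = -(1 : ZMod n) := by ring
      rw [this]
      have h1 : ((1 : ℕ) : ZMod n) ≠ 0 := by
        intro h0
        have := congrArg ZMod.val h0
        rw [ZMod.val_cast_of_lt (by omega), ZMod.val_zero] at this
        omega
      have : (-(1 : ZMod n)).val = n - 1 := by
        rw [show (1 : ZMod n) = ((1 : ℕ) : ZMod n) from by push_cast; rfl, ZMod.neg_val,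
          if_neg h1, ZMod.val_cast_of_lt (by omega)]
      omega
    set τ : ZMod n ≃ Fin n := (Equiv.swap t₀ p).trans τ' with hτdef
    have hτt₀ : τ t₀ = x₀ := by
      rw [hτdef]
      show τ' (Equiv.swap t₀ p t₀) = x₀
      rw [Equiv.swap_apply_left, hp, Equiv.apply_symm_apply]
    have hτimg : (arc n k (t₀ + 1)).image τ = A := by
      rw [hτdef, ← hτ']
      rw [show (((Equiv.swap t₀ p).trans τ' : ZMod n ≃ Fin n) : ZMod n → Fin n)
        = (τ' : ZMod n → Fin n) ∘ (Equiv.swap t₀ p) from rfl, ← Finset.image_image]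
      congr 1
      exact image_swap_not_mem ht₀A hpA
    have hkey := key τ hτt₀
    have hGoodmem : t₀ + 1 ∈ Good 𝒜 k τ := by
      rw [Good, Finset.mem_filter]
      exact ⟨Finset.mem_univ _, hτimg ▸ hAmem⟩
    rw [hu τ, hkey, mem_arc hkn] at hGoodmem
    have : t₀ + 1 - uof τ₀ = ((k : ℕ) : ZMod n) := by
      rw [ht₀, show uof τ₀ + ((k-1 : ℕ) : ZMod n) + 1 - uof τ₀ = ((k-1 : ℕ) : ZMod n) + 1 from
        by ring, Nat.cast_sub (by omega)]
      push_cast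
      ring
    rw [this, ZMod.val_cast_of_lt (by omega)] at hGoodmem
    omega
  · -- x₀ ∈ A → A ∈ 𝒜
    intro hx₀A
    obtain ⟨τ', hτ'⟩ := exists_equiv_image (S := arc n k t₀) (A := A) hzf
      (by rw [card_arc hkn, hA])
    set p : ZMod n := τ'.symm x₀ with hp
    have hpA : p ∈ arc n k t₀ := by
      have hmem : x₀ ∈ A := hx₀A
      rw [← hτ'] at hmem
      obtain ⟨q, hq, hqe⟩ := Finset.mem_image.mp hmem
      have hqp : q = p := by rw [hp, ← hqe, Equiv.symm_apply_apply]
      rwa [hqp] at hq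
    have ht₀mem : t₀ ∈ arc n k t₀ := self_mem_arc hk hkn t₀
    set τ : ZMod n ≃ Fin n := (Equiv.swap t₀ p).trans τ' with hτdef
    have hτt₀ : τ t₀ = x₀ := by
      rw [hτdef]
      show τ' (Equiv.swap t₀ p t₀) = x₀
      rw [Equiv.swap_apply_left, hp, Equiv.apply_symm_apply]
    have hτimg : (arc n k t₀).image τ = A := by
      rw [hτdef, ← hτ']
      rw [show (((Equiv.swap t₀ p).trans τ' : ZMod n ≃ Fin n) : ZMod n → Fin n)
        = (τ' : ZMod n → Fin n) ∘ (Equiv.swap t₀ p) from rfl, ← Finset.image_image]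
      congr 1
      exact image_swap_mem ht₀mem hpA
    have hkey := key τ hτt₀
    have ht₀Good : t₀ ∈ Good 𝒜 k τ := by
      rw [hu τ, hkey, mem_arc hkn, ht₀, show uof τ₀ + ((k-1:ℕ) : ZMod n) - uof τ₀
        = ((k-1:ℕ) : ZMod n) from by ring, ZMod.val_cast_of_lt (by omega)]
      omega
    rw [Good, Finset.mem_filter] at ht₀Good
    rw [← hτimg]
    exact ht₀Good.2

end EKRU

open Finset in
theorem stmt11 (r k : ℕ) (hk : 1 ≤ k) (hr : 2 * k + 1 ≤ r)
    (f : {s : Finset (Fin r) // s.card = k} → Finset (Fin r))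
    (hf : IsKIColoring (KneserGraph r k) r k 0 f) :
    ∃ σ : Equiv.Perm (Fin r), ∀ v : {s : Finset (Fin r) // s.card = k},
      f v = v.1.image σ := by
  classical
  haveI : NeZero r := ⟨by omega⟩
  obtain ⟨hcards, hadj⟩ := hf
  have hkr : k ≤ r := by omega
  have hdisjf : ∀ v w : {s : Finset (Fin r) // s.card = k}, v ≠ w → Disjoint v.1 w.1 →
      Disjoint (f v) (f w) := by
    intro v w hne hd
    have hadjvw : (KneserGraph r k).Adj v w := by
      rw [KneserGraph, SimpleGraph.fromRel_adj]
      exact ⟨hne, Or.inl hd⟩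
    have h1 := hadj hadjvw
    rw [Nat.le_zero, Finset.card_eq_zero] at h1
    exact Finset.disjoint_iff_inter_eq_empty.mpr h1
  set 𝒜 : Fin r → Finset (Finset (Fin r)) := fun b =>
    ((univ : Finset {s : Finset (Fin r) // s.card = k}).filter (fun v => b ∈ f v)).image
      (fun v => v.1) with h𝒜
  have hmem𝒜 : ∀ b (A : Finset (Fin r)), A ∈ 𝒜 b ↔ ∃ hA : A.card = k, b ∈ f ⟨A, hA⟩ := by
    intro b A
    rw [h𝒜]
    simp only [Finset.mem_image, Finset.mem_filter, Finset.mem_univ, true_and]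
    constructor
    · rintro ⟨v, hv, rfl⟩
      exact ⟨v.2, by rwa [Subtype.coe_eta]⟩
    · rintro ⟨hA, hb⟩
      exact ⟨⟨A, hA⟩, hb, rfl⟩
  have hsize : ∀ b, ∀ A ∈ 𝒜 b, A.card = k := by
    intro b A hA
    obtain ⟨h, -⟩ := (hmem𝒜 b A).mp hA
    exact h
  have hint : ∀ b, ∀ A ∈ 𝒜 b, ∀ B ∈ 𝒜 b, ¬ Disjoint A B := by
    intro b A hA B hB hAB
    obtain ⟨hAc, hbA⟩ := (hmem𝒜 b A).mp hA
    obtain ⟨hBc, hbB⟩ := (hmem𝒜 b B).mp hB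
    by_cases hABeq : A = B
    · subst hABeq
      have : A = ∅ := by simpa using disjoint_self.mp hAB
      rw [this] at hAc
      simp at hAc
      omega
    · have hvne : (⟨A, hAc⟩ : {s : Finset (Fin r) // s.card = k}) ≠ ⟨B, hBc⟩ := by
        intro h
        exact hABeq (congrArg Subtype.val h)
      have := hdisjf _ _ hvne hAB
      exact (Finset.disjoint_left.mp this hbA) hbB
  have hEKR : ∀ b, (𝒜 b).card ≤ (r-1).choose (k-1) := by
    intro b
    apply Finset.erdos_ko_rado (𝒜 := 𝒜 b) (r := k) ?_ ?_ (by omega)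
    · intro A hA B hB
      exact hint b A (by exact_mod_cast hA) B (by exact_mod_cast hB)
    · intro A hA
      exact hsize b A (by exact_mod_cast hA)
  have hcard𝒜 : ∀ b, (𝒜 b).card
      = ((univ : Finset {s : Finset (Fin r) // s.card = k}).filter (fun v => b ∈ f v)).card := by
    intro b
    rw [h𝒜]
    exact Finset.card_image_of_injective _ Subtype.val_injective
  have hVcard : Fintype.card {s : Finset (Fin r) // s.card = k} = r.choose k := by
    rw [Fintype.card_subtype]
    have h1 : (univ.filter fun s : Finset (Fin r) => s.card = k) = powersetCard k univ := by
      ext A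
      simp [Finset.mem_powersetCard_univ]
    rw [h1, Finset.card_powersetCard, Finset.card_univ, Fintype.card_fin]
  have hsum : ∑ b : Fin r, (𝒜 b).card = k * r.choose k := by
    calc ∑ b : Fin r, (𝒜 b).card
        = ∑ b : Fin r, ∑ v : {s : Finset (Fin r) // s.card = k}, if b ∈ f v then 1 else 0 := by
          refine Finset.sum_congr rfl fun b _ => ?_
          rw [hcard𝒜 b, Finset.card_filter]
      _ = ∑ v : {s : Finset (Fin r) // s.card = k}, ∑ b : Fin r, if b ∈ f v then 1 else 0 :=
          Finset.sum_comm
      _ = ∑ v : {s : Finset (Fin r) // s.card = k}, (f v).card := by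
          refine Finset.sum_congr rfl fun v _ => ?_
          rw [← Finset.card_filter]
          congr 1
          ext b
          simp
      _ = ∑ v : {s : Finset (Fin r) // s.card = k}, k :=
          Finset.sum_congr rfl fun v _ => hcards v
      _ = Fintype.card {s : Finset (Fin r) // s.card = k} * k := by
          rw [Finset.sum_const, Finset.card_univ, smul_eq_mul]
      _ = k * r.choose k := by rw [hVcard]; ring
  have hid : r * ((r-1).choose (k-1)) = k * r.choose k := by
    have h1 := Nat.add_one_mul_choose_eq (r-1) (k-1)
    have e1 : r - 1 + 1 = r := by omega
    have e2 : k - 1 + 1 = k := by omega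
    rw [e1, e2] at h1
    rw [h1]
    ring
  have hcardeq : ∀ b, (𝒜 b).card = (r-1).choose (k-1) := by
    by_contra h
    push_neg at h
    obtain ⟨b₀, hb₀⟩ := h
    have hlt := Finset.sum_lt_sum (s := (univ : Finset (Fin r)))
      (f := fun b => (𝒜 b).card) (g := fun _ => (r-1).choose (k-1))
      (fun b _ => hEKR b) ⟨b₀, Finset.mem_univ _, lt_of_le_of_ne (hEKR b₀) hb₀⟩
    rw [hsum, Finset.sum_const, Finset.card_univ, Fintype.card_fin, smul_eq_mul, hid] at hlt
    exact lt_irrefl _ hlt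
  have hstar := fun b => EKRU.ekr_unique hk hr (𝒜 b) (hsize b) (hint b) (hcardeq b)
  choose τ hτ using hstar
  have hbf : ∀ (v : {s : Finset (Fin r) // s.card = k}) (b : Fin r), b ∈ f v ↔ τ b ∈ v.1 := by
    intro v b
    rw [← hτ b v.1 v.2, hmem𝒜 b v.1]
    constructor
    · intro hb
      exact ⟨v.2, by rwa [Subtype.coe_eta]⟩
    · rintro ⟨hA, hb⟩
      rwa [Subtype.coe_eta] at hb
  set F : Fin r → Finset (Fin r) := fun a => univ.filter (fun b => τ b = a) with hF
  have hfib : ∀ v : {s : Finset (Fin r) // s.card = k}, ∑ a ∈ v.1, (F a).card = k := by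
    intro v
    have hfveq : f v = univ.filter (fun b => τ b ∈ v.1) := by
      ext b
      simp [hbf v b]
    have h1 : (f v).card = ∑ a ∈ v.1,
        ((univ.filter (fun b => τ b ∈ v.1)).filter (fun b => τ b = a)).card := by
      rw [hfveq]
      exact Finset.card_eq_sum_card_fiberwise (fun b hb => (Finset.mem_filter.mp hb).2)
    have h2 : ∀ a ∈ v.1, ((univ.filter (fun b => τ b ∈ v.1)).filter (fun b => τ b = a)).card
        = (F a).card := by
      intro a ha
      congr 1
      rw [hF, Finset.filter_filter]
      ext b
      simp only [Finset.mem_filter, Finset.mem_univ, true_and]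
      exact ⟨fun h => h.2, fun h => ⟨h ▸ ha, h⟩⟩
    rw [Finset.sum_congr rfl h2] at h1
    rw [← h1, hcards v]
  have hfibconst : ∀ a a' : Fin r, (F a).card = (F a').card := by
    intro a a'
    rcases eq_or_ne a a' with rfl | hne
    · rfl
    obtain ⟨t, hts, htc⟩ := Finset.exists_subset_card_eq (s := (univ : Finset (Fin r)) \ {a, a'}) (n := k-1)
      (by
        rw [Finset.card_sdiff_of_subset (by simp)]
        rw [Finset.card_univ, Fintype.card_fin]
        have : ({a, a'} : Finset (Fin r)).card ≤ 2 := Finset.card_insert_le _ _ |>.trans (by simp)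
        omega)
    have hat : a ∉ t := fun h => by simpa using hts h
    have ha't : a' ∉ t := fun h => by simpa using hts h
    have hv₁ : (insert a t).card = k := by
      rw [Finset.card_insert_of_notMem hat, htc]
      omega
    have hv₂ : (insert a' t).card = k := by
      rw [Finset.card_insert_of_notMem ha't, htc]
      omega
    have h1 := hfib ⟨insert a t, hv₁⟩
    have h2 := hfib ⟨insert a' t, hv₂⟩
    simp only at h1 h2
    rw [Finset.sum_insert hat] at h1
    rw [Finset.sum_insert ha't] at h2
    omega
  obtain ⟨B₀, -, hB₀c⟩ := Finset.exists_subset_card_eq (s := (univ : Finset (Fin r))) (n := k)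
    (by rw [Finset.card_univ, Fintype.card_fin]; omega)
  have hconst : ∀ a, (F a).card = 1 := by
    intro a
    have h0 := hfib ⟨B₀, hB₀c⟩
    simp only at h0
    have h1 : ∑ a' ∈ B₀, (F a').card = ∑ a' ∈ B₀, (F a).card :=
      Finset.sum_congr rfl (fun a' _ => hfibconst a' a)
    rw [h1, Finset.sum_const, hB₀c, smul_eq_mul] at h0
    have := Nat.eq_of_mul_eq_mul_left (show 0 < k by omega) (h0.trans (mul_one k).symm)
    exact this
  have hinj : Function.Injective τ := by
    intro b b' hbb
    obtain ⟨c, hc⟩ := Finset.card_eq_one.mp (hconst (τ b))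
    have hb : b ∈ F (τ b) := by simp [hF]
    have hb' : b' ∈ F (τ b) := by simp [hF, hbb]
    rw [hc, Finset.mem_singleton] at hb hb'
    rw [hb, hb']
  have hbij : Function.Bijective τ := Finite.injective_iff_bijective.mp hinj
  refine ⟨(Equiv.ofBijective τ hbij).symm, fun v => ?_⟩
  ext x
  rw [hbf v x]
  simp only [Finset.mem_image]
  constructor
  · intro h
    refine ⟨τ x, h, ?_⟩
    exact (Equiv.ofBijective τ hbij).symm_apply_apply x
  · rintro ⟨a, ha, rfl⟩
    have h2 : τ ((Equiv.ofBijective τ hbij).symm a) = a :=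
      (Equiv.ofBijective τ hbij).apply_symm_apply a
    rwa [h2]
end

section
/- (Erdős–Ko–Rado) For r ≥ 2k, the largest independent set in the Kneser graph K(r,k) has size exactly C(r-1,k-1). -/
theorem stmt12 (r k : ℕ) (hr : 2 * k ≤ r) :
    IsGreatest {n : ℕ | ∃ I : Finset {s : Finset (Fin r) // s.card = k},
        ((↑I : Set {s : Finset (Fin r) // s.card = k}).Pairwise
          fun a b => ¬ (KneserGraph r k).Adj a b) ∧ I.card = n}
      ((r - 1).choose (k - 1)) := by
  constructor
  · -- membership: exhibit an intersecting family of the right size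
    rcases Nat.eq_zero_or_pos k with hk | hk
    · subst hk
      refine ⟨{⟨∅, Finset.card_empty⟩}, ?_, ?_⟩
      · simp [Set.Pairwise]
      · simp [Nat.choose]
    · have hr0 : 0 < r := by omega
      set z : Fin r := ⟨0, hr0⟩ with hz
      refine ⟨Finset.univ.filter (fun s : {s : Finset (Fin r) // s.card = k} => z ∈ s.1),
        ?_, ?_⟩
      · intro a ha b hb hab hadj
        simp only [Finset.coe_filter, Set.mem_setOf_eq] at ha hb
        rcases hadj with ⟨_, h | h⟩
        · exact (Finset.disjoint_left.1 h ha.2) hb.2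
        · exact (Finset.disjoint_left.1 h hb.2) ha.2
      · have hkey : (r - 1).choose (k - 1)
            = (Finset.powersetCard (k - 1) (Finset.univ.erase z)).card := by
          rw [Finset.card_powersetCard, Finset.card_erase_of_mem (Finset.mem_univ z),
            Finset.card_univ, Fintype.card_fin]
        rw [hkey]
        refine Finset.card_bij (fun (s : {s : Finset (Fin r) // s.card = k}) _ => s.1.erase z) ?_ ?_ ?_
        · intro s hs
          simp only [Finset.mem_filter] at hs
          rw [Finset.mem_powersetCard]
          exact ⟨fun x hx => Finset.mem_erase.2 ⟨(Finset.mem_erase.1 hx).1,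
            Finset.mem_univ x⟩,
            by rw [Finset.card_erase_of_mem hs.2, s.2]⟩
        · intro a ha b hb hab
          simp only [Finset.mem_filter] at ha hb
          apply Subtype.ext
          rw [← Finset.insert_erase ha.2, ← Finset.insert_erase hb.2]
          exact congrArg _ hab
        · intro t ht
          rw [Finset.mem_powersetCard] at ht
          have hzt : z ∉ t := fun h => (Finset.mem_erase.1 (ht.1 h)).1 rfl
          have hcard : (insert z t).card = k := by
            rw [Finset.card_insert_of_notMem hzt, ht.2]; omega
          refine ⟨⟨insert z t, hcard⟩, ?_, ?_⟩
          · simp [Finset.mem_filter]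
          · simp [Finset.erase_insert hzt]
  · -- upper bound
    rintro n ⟨I, hI, rfl⟩
    rcases Nat.eq_zero_or_pos k with hk | hk
    · subst hk
      have : I.card ≤ Fintype.card {s : Finset (Fin r) // s.card = 0} :=
        Finset.card_le_univ I
      simpa [Fintype.card_finset_len] using this
    · set 𝒜 : Finset (Finset (Fin r)) := I.image (fun s => s.1) with h𝒜
      have hcard : 𝒜.card = I.card :=
        Finset.card_image_of_injective _ (fun a b h => Subtype.ext h)
      have hint : (↑𝒜 : Set (Finset (Fin r))).Intersecting := by
        intro a ha b hb hd
        simp only [h𝒜, Finset.coe_image, Set.mem_image, Finset.mem_coe] at ha hb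
        obtain ⟨a', ha', rfl⟩ := ha
        obtain ⟨b', hb', rfl⟩ := hb
        rcases eq_or_ne a' b' with rfl | hne
        · have h0 : a'.1 = ∅ := (Finset.disjoint_self_iff_empty _).1 hd
          have := a'.2
          rw [h0] at this
          simp at this
          omega
        · exact hI ha' hb' hne ⟨hne, Or.inl hd⟩
      have hsized : (↑𝒜 : Set (Finset (Fin r))).Sized k := by
        intro a ha
        simp only [h𝒜, Finset.coe_image, Set.mem_image, Finset.mem_coe] at ha
        obtain ⟨a', _, rfl⟩ := ha
        exact a'.2
      have := Finset.erdos_ko_rado hint hsized (by omega)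
      omega
end

section
/- Let S be a feedback vertex set of G and let h be a (q,k,i)-coloring of G[S]. If for every tree component T of G − S and for some root r of T there exists a k-subset C with M_r(C) = 1 (where M is defined by the bottom-up dynamic programming recurrence: M_w(C) = 1 for a leaf w iff (w,C) is h-compatible; M_w(C) = 1 for an internal node w iff (w,C) is h-compatible and every child u of w admits some C' with M_u(C') = 1 and |C ∩ C'| ≤ i), then h extends to a proper (q,k,i)-coloring of G; and conversely. -/
open Classical in
/-- Build the extension of `h` to the forest by top-down choice. -/
noncomputable def stmtF {V : Type*} {q : ℕ} (S : Set V) (p : V → V) (depth : V → ℕ)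
    (h : V → Finset (Fin q)) (M : V → Finset (Fin q) → Prop) (k i : ℕ)
    (hdepth : ∀ v, v ∉ S → p v ≠ v → depth (p v) < depth v)
    (root : ∀ w, w ∉ S → p w = w → ∃ C : Finset (Fin q), C.card = k ∧ M w C)
    (v : V) : Finset (Fin q) :=
  if hv : v ∈ S then h v
  else if hr : p v = v then (root v hv hr).choose
  else if hex : ∃ C' : Finset (Fin q), C'.card = k ∧ M v C' ∧
      ((stmtF S p depth h M k i hdepth root (p v)) ∩ C').card ≤ i then hex.choose else ∅
termination_by depth v
decreasing_by exact hdepth v hv hr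

lemma stmtF_spec {V : Type*} {q : ℕ} (G : SimpleGraph V) (S : Set V) (p : V → V)
    (depth : V → ℕ) (h : V → Finset (Fin q)) (M : V → Finset (Fin q) → Prop) (k i : ℕ)
    (hpS : ∀ v, v ∉ S → p v ∉ S)
    (hdepth : ∀ v, v ∉ S → p v ≠ v → depth (p v) < depth v)
    (root : ∀ w, w ∉ S → p w = w → ∃ C : Finset (Fin q), C.card = k ∧ M w C)
    (hM : ∀ w, w ∉ S → ∀ C : Finset (Fin q), C.card = k →
      (M w C ↔ ((∀ x ∈ S, G.Adj w x → ((C ∩ h x).card ≤ i)) ∧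
        ∀ u, u ∉ S → p u = w → u ≠ w →
          ∃ C' : Finset (Fin q), C'.card = k ∧ M u C' ∧ (C ∩ C').card ≤ i))) :
    ∀ v, v ∉ S →
      (stmtF S p depth h M k i hdepth root v).card = k ∧
      M v (stmtF S p depth h M k i hdepth root v) ∧
      (p v ≠ v → ((stmtF S p depth h M k i hdepth root (p v)) ∩
        (stmtF S p depth h M k i hdepth root v)).card ≤ i) := by
  suffices H : ∀ n : ℕ, ∀ v, v ∉ S → depth v = n →
      (stmtF S p depth h M k i hdepth root v).card = k ∧
      M v (stmtF S p depth h M k i hdepth root v) ∧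
      (p v ≠ v → ((stmtF S p depth h M k i hdepth root (p v)) ∩
        (stmtF S p depth h M k i hdepth root v)).card ≤ i) by
    intro v hv; exact H _ v hv rfl
  intro n
  induction n using Nat.strong_induction_on with
  | _ n ih =>
    intro v hv hd
    by_cases hr : p v = v
    · have hEq : stmtF S p depth h M k i hdepth root v = (root v hv hr).choose := by
        rw [stmtF, dif_neg hv, dif_pos hr]
      obtain ⟨hc, hMc⟩ := (root v hv hr).choose_spec
      exact ⟨hEq ▸ hc, hEq ▸ hMc, fun hr' => absurd hr hr'⟩
    · have hpv : p v ∉ S := hpS v hv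
      have hdlt : depth (p v) < depth v := hdepth v hv hr
      obtain ⟨hcardp, hMp, -⟩ := ih (depth (p v)) (hd ▸ hdlt) (p v) hpv rfl
      have hex : ∃ C' : Finset (Fin q), C'.card = k ∧ M v C' ∧
          ((stmtF S p depth h M k i hdepth root (p v)) ∩ C').card ≤ i :=
        ((hM (p v) hpv _ hcardp).mp hMp).2 v hv rfl (fun e => hr e.symm)
      have hEq : stmtF S p depth h M k i hdepth root v = hex.choose := by
        rw [stmtF, dif_neg hv, dif_neg hr, dif_pos hex]
      obtain ⟨hc, hMv, hleg⟩ := hex.choose_spec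
      exact ⟨hEq ▸ hc, hEq ▸ hMv, fun _ => hEq ▸ hleg⟩

/-- Correctness of the bottom-up DP over the forest `G - S`, rooted via a parent
function `p` (roots are fixed points of `p`; `depth` certifies well-foundedness).
`h` is a proper `(q,k,i)`-coloring of `G[S]`, and `M` satisfies the DP recurrence:
`M w C` holds iff `(w,C)` is `h`-compatible and every child `u` of `w` admits some
`C'` with `M u C'` and `(C,C')` legal (for a leaf the child condition is vacuous).
Then `h` extends to a proper `(q,k,i)`-coloring of `G` iff for every root `w` of a
tree component there is a `k`-set `C` with `M w C`. -/
theorem stmt16 {V : Type*} [Fintype V] [DecidableEq V] (G : SimpleGraph V)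
    (q k i : ℕ) (S : Set V)
    (hforest : (G.induce Sᶜ).IsAcyclic)
    (p : V → V) (depth : V → ℕ)
    (hpS : ∀ v, v ∉ S → p v ∉ S)
    (hpadj : ∀ v, v ∉ S → p v ≠ v → G.Adj v (p v))
    (hdepth : ∀ v, v ∉ S → p v ≠ v → depth (p v) < depth v)
    (hedge : ∀ u v, u ∉ S → v ∉ S → G.Adj u v → p u = v ∨ p v = u)
    (h : V → Finset (Fin q))
    (hhcard : ∀ v ∈ S, (h v).card = k)
    (hhproper : ∀ u ∈ S, ∀ v ∈ S, G.Adj u v → ((h u) ∩ (h v)).card ≤ i)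
    (M : V → Finset (Fin q) → Prop)
    (hM : ∀ w, w ∉ S → ∀ C : Finset (Fin q), C.card = k →
      (M w C ↔ ((∀ x ∈ S, G.Adj w x → ((C ∩ h x).card ≤ i)) ∧
        ∀ u, u ∉ S → p u = w → u ≠ w →
          ∃ C' : Finset (Fin q), C'.card = k ∧ M u C' ∧ (C ∩ C').card ≤ i))) :
    (∃ g : V → Finset (Fin q), IsKIColoring G q k i g ∧ ∀ v ∈ S, g v = h v) ↔
      (∀ w, w ∉ S → p w = w → ∃ C : Finset (Fin q), C.card = k ∧ M w C) := by
  constructor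
  · rintro ⟨g, ⟨gcard, gprop⟩, gS⟩ w hw _
    have hle : ∀ v : V, depth v ≤ Finset.univ.sup depth :=
      fun v => Finset.le_sup (Finset.mem_univ v)
    have key : ∀ n : ℕ, ∀ v, v ∉ S → Finset.univ.sup depth - depth v = n → M v (g v) := by
      intro n
      induction n using Nat.strong_induction_on with
      | _ n ih =>
        intro v hv hd
        rw [hM v hv (g v) (gcard v)]
        constructor
        · intro x hx hadj
          have := gprop hadj
          rwa [gS x hx] at this
        · intro u hu hpu hune
          have hne : p u ≠ u := by rw [hpu]; exact Ne.symm hune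
          have hlt : depth v < depth u := by
            have := hdepth u hu hne; rwa [hpu] at this
          refine ⟨g u, gcard u, ?_, ?_⟩
          · have h1 := hle u
            subst hd
            exact ih _ (by omega) u hu rfl
          · have hadj : G.Adj u v := by
              have := hpadj u hu hne; rwa [hpu] at this
            exact gprop hadj.symm
    exact ⟨g w, gcard w, key _ w hw rfl⟩
  · intro root
    set g := stmtF S p depth h M k i hdepth root with hg
    have spec := stmtF_spec G S p depth h M k i hpS hdepth root hM
    have gS : ∀ v ∈ S, g v = h v := by
      intro v hv; rw [hg, stmtF, dif_pos hv]
    refine ⟨g, ⟨?_, ?_⟩, gS⟩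
    · intro v
      by_cases hv : v ∈ S
      · rw [gS v hv]; exact hhcard v hv
      · exact (spec v hv).1
    · intro u v hadj
      by_cases hu : u ∈ S <;> by_cases hv : v ∈ S
      · rw [gS u hu, gS v hv]; exact hhproper u hu v hv hadj
      · obtain ⟨hc, hMv, -⟩ := spec v hv
        have := ((hM v hv _ hc).mp hMv).1 u hu hadj.symm
        rw [gS u hu, Finset.inter_comm]; exact this
      · obtain ⟨hc, hMu, -⟩ := spec u hu
        have := ((hM u hu _ hc).mp hMu).1 v hv hadj
        rw [gS v hv]; exact this
      · rcases hedge u v hu hv hadj with hpe | hpe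
        · have hne : p u ≠ u := by rw [hpe]; exact hadj.ne'
          have := (spec u hu).2.2 hne
          rw [hpe] at this
          rwa [Finset.inter_comm]
        · have hne : p v ≠ v := by rw [hpe]; exact hadj.ne
          have := (spec v hv).2.2 hne
          rwa [hpe] at this
end
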